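/- arXiv:math/0505028 — 4 statements merged into one kernel-verified Lean document; each statement's English description precedes it below -/
import Mathlib

section
/- Let θ₁, θ₂ be irrational numbers, d₁, d₂ nonzero integers, and f₁, f₂ : 𝕋 → ℝ continuous functions such that α = Φ_{θ₁,d₁,f₁} and β = Φ_{θ₂,d₂,f₂} are uniquely ergodic. If (θ₁ − θ₂ ∈ ℤ or θ₁ + θ₂ ∈ ℤ) and |d₁| = |d₂|, then there exist sequences (σₙ) and (γₙ) of homeomorphisms of 𝕋² such that sup_{x ∈ 𝕋²} dist(σₙ(α(σₙ⁻¹(x))), β(x)) → 0 and sup_{x ∈ 𝕋²} dist(γₙ(β(γₙ⁻¹(x))), α(x)) → 0 as n → ∞, and m₂(σₙ(S)) = m₂(S) and m₂(γₙ(S)) = m₂(S) for every Borel set S ⊂ 𝕋² and every n. -/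
open MeasureTheory Filter Topology

noncomputable section

instance : MeasurableSpace Circle := borel Circle
instance : BorelSpace Circle := ⟨rfl⟩

/-- The normalized Haar (Lebesgue) probability measure on the unit circle `𝕋`,
realized as the pushforward of Lebesgue measure on `(0,1]` under `t ↦ e^{2πit}`. -/
def circleHaar : Measure Circle :=
  Measure.map (fun t : ℝ => Circle.exp (2 * Real.pi * t))
    (volume.restrict (Set.Ioc (0:ℝ) 1))

/-- The product measure `m₂ = m × m` on `𝕋² = 𝕋 × 𝕋`. -/
def m2 : Measure (Circle × Circle) := circleHaar.prod circleHaar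

/-- The metric `dist((ξ,ζ),(ξ′,ζ′)) = sqrt(|ξ − ξ′|² + |ζ − ζ′|²)` on `𝕋²`. -/
def distT2 (p q : Circle × Circle) : ℝ :=
  Real.sqrt (‖(p.1 : ℂ) - (q.1 : ℂ)‖ ^ 2 + ‖(p.2 : ℂ) - (q.2 : ℂ)‖ ^ 2)

/-- The Furstenberg transformation `Φ_{θ,d,f}(ξ,ζ) = (ξ·e^{2πiθ}, ζ·ξ^d·e^{2πi f(ξ)})`. -/
def Phi (θ : ℝ) (d : ℤ) (f : Circle → ℝ) : Circle × Circle → Circle × Circle :=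
  fun p => (p.1 * Circle.exp (2 * Real.pi * θ), p.2 * p.1 ^ d * Circle.exp (2 * Real.pi * f p.1))





instance factPos1 : Fact ((0:ℝ) < 1) := ⟨one_pos⟩

lemma circleHaar_eq :
    circleHaar = Measure.map AddCircle.toCircle (volume : Measure (AddCircle (1:ℝ))) := by
  rw [← (AddCircle.measurePreserving_mk 1 0).map_eq,
    Measure.map_map AddCircle.continuous_toCircle.measurable
      (AddCircle.measurable_mk' (a := (1:ℝ)))]
  · rw [circleHaar]
    congr 1
    · funext t
      rw [Function.comp_apply, AddCircle.toCircle_apply_mk]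
      norm_num
    · norm_num

instance : IsProbabilityMeasure (volume : Measure (AddCircle (1:ℝ))) :=
  ⟨by simp [AddCircle.measure_univ]⟩

instance circleHaar_prob : IsProbabilityMeasure circleHaar := by
  rw [circleHaar_eq]
  exact Measure.isProbabilityMeasure_map AddCircle.continuous_toCircle.measurable.aemeasurable

def toC : AddCircle (1:ℝ) → Circle := AddCircle.toCircle

lemma toC_surj : Function.Surjective toC := by
  intro c
  obtain ⟨x, hx⟩ := (AddCircle.homeomorphCircle one_ne_zero).surjective c
  exact ⟨x, by rw [toC, ← AddCircle.homeomorphCircle_apply one_ne_zero]; exact hx⟩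

lemma toC_neg (x : AddCircle (1:ℝ)) : toC (-x) = (toC x)⁻¹ := by
  simp only [toC]
  rw [eq_inv_iff_mul_eq_one, ← AddCircle.toCircle_add, neg_add_cancel,
    AddCircle.toCircle_zero]

lemma map_mul_right_circleHaar (c : Circle) :
    Measure.map (fun z => z * c) circleHaar = circleHaar := by
  obtain ⟨d, hd⟩ := toC_surj c
  rw [circleHaar_eq,
    Measure.map_map (continuous_mul_right c).measurable AddCircle.continuous_toCircle.measurable]
  have : ((fun z => z * c) ∘ AddCircle.toCircle) = AddCircle.toCircle ∘ (fun x => x + d) := by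
    funext x
    simp only [Function.comp_apply, AddCircle.toCircle_add]
    rw [← hd]; rfl
  rw [this, ← Measure.map_map AddCircle.continuous_toCircle.measurable (by measurability),
    map_add_right_eq_self]

lemma map_inv_circleHaar :
    Measure.map (fun z : Circle => z⁻¹) circleHaar = circleHaar := by
  rw [circleHaar_eq,
    Measure.map_map continuous_inv.measurable AddCircle.continuous_toCircle.measurable]
  have : ((fun z : Circle => z⁻¹) ∘ AddCircle.toCircle) = AddCircle.toCircle ∘ (fun x : AddCircle (1:ℝ) => -x) := by
    funext x
    simp only [Function.comp_apply]
    exact (toC_neg x).symm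
  rw [this, ← Measure.map_map AddCircle.continuous_toCircle.measurable (measurable_neg),
    Measure.map_neg_eq_self]

instance m2_prob : IsProbabilityMeasure m2 := by
  rw [m2]; infer_instance

/-- skew homeomorphism `(ξ,ζ) ↦ (ξ, ζ·w(ξ))`. -/
def skewH (w : Circle → Circle) (hw : Continuous w) : (Circle × Circle) ≃ₜ (Circle × Circle) where
  toFun p := (p.1, p.2 * w p.1)
  invFun p := (p.1, p.2 * (w p.1)⁻¹)
  left_inv p := by simp
  right_inv p := by simp
  continuous_toFun := by
    exact continuous_fst.prodMk (continuous_snd.mul (hw.comp continuous_fst))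
  continuous_invFun := by
    exact continuous_fst.prodMk (continuous_snd.mul ((hw.comp continuous_fst).inv))

lemma skewH_mp (w : Circle → Circle) (hw : Continuous w) :
    MeasurePreserving (skewH w hw) m2 m2 := by
  have h := (MeasurePreserving.id circleHaar).skew_product
    (g := fun ξ ζ => ζ * w ξ) (μc := circleHaar) (μd := circleHaar)
    (continuous_snd.mul (hw.comp continuous_fst)).measurable
    (Filter.Eventually.of_forall fun ξ => map_mul_right_circleHaar (w ξ))
  exact h

/-- flip in the second coordinate. -/
def flip2H : (Circle × Circle) ≃ₜ (Circle × Circle) where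
  toFun p := (p.1, p.2⁻¹)
  invFun p := (p.1, p.2⁻¹)
  left_inv p := by simp
  right_inv p := by simp
  continuous_toFun := continuous_fst.prodMk continuous_snd.inv
  continuous_invFun := continuous_fst.prodMk continuous_snd.inv

/-- flip in the first coordinate. -/
def flip1H : (Circle × Circle) ≃ₜ (Circle × Circle) where
  toFun p := (p.1⁻¹, p.2)
  invFun p := (p.1⁻¹, p.2)
  left_inv p := by simp
  right_inv p := by simp
  continuous_toFun := continuous_fst.inv.prodMk continuous_snd
  continuous_invFun := continuous_fst.inv.prodMk continuous_snd

lemma flip2H_mp : MeasurePreserving flip2H m2 m2 :=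
  (MeasurePreserving.id circleHaar).prod
    ⟨continuous_inv.measurable, map_inv_circleHaar⟩

lemma flip1H_mp : MeasurePreserving flip1H m2 m2 :=
  (MeasurePreserving.prod ⟨continuous_inv.measurable, map_inv_circleHaar⟩
    (MeasurePreserving.id circleHaar))

lemma mp_symm (σ : (Circle × Circle) ≃ₜ (Circle × Circle)) (h : MeasurePreserving σ m2 m2) :
    MeasurePreserving σ.symm m2 m2 := by
  have := MeasurePreserving.symm σ.toMeasurableEquiv h
  exact this

lemma image_meas (σ : (Circle × Circle) ≃ₜ (Circle × Circle)) (h : MeasurePreserving σ m2 m2)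
    (S : Set (Circle × Circle)) (hS : MeasurableSet S) : m2 (σ '' S) = m2 S := by
  rw [show ⇑σ '' S = ⇑σ.symm ⁻¹' S from σ.toEquiv.image_eq_preimage_symm S]
  exact (mp_symm σ h).measure_preimage hS.nullMeasurableSet

def toCHom : AddCircle (1:ℝ) →+ Additive Circle :=
  { toFun := Additive.ofMul ∘ AddCircle.toCircle,
    map_zero' := congrArg Additive.ofMul AddCircle.toCircle_zero,
    map_add' := fun a b => congrArg Additive.ofMul (AddCircle.toCircle_add a b) }

lemma toC_zsmul (k : ℤ) (x : AddCircle (1:ℝ)) : toC (k • x) = (toC x) ^ k := by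
  have := map_zsmul toCHom k x
  simpa [toC, toCHom] using congrArg Additive.toMul this

lemma trig_approx (h : Circle → ℝ) (hh : Continuous h) (ε : ℝ) (hε : 0 < ε) :
    ∃ c : ℤ →₀ ℂ, ∀ z : Circle,
      ‖(h z : ℂ) - ∑ k ∈ c.support, c k * (z:ℂ) ^ k‖ ≤ ε := by
  set F : C(AddCircle (1:ℝ), ℂ) :=
    ⟨fun x => (h (toC x) : ℂ), by
      exact Complex.continuous_ofReal.comp (hh.comp AddCircle.continuous_toCircle)⟩ with hFdef
  have hF : F ∈ closure ((Submodule.span ℂ (Set.range (@fourier 1))) : Set C(AddCircle (1:ℝ), ℂ)) := by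
    rw [← Submodule.topologicalClosure_coe, span_fourier_closure_eq_top]
    trivial
  obtain ⟨P, hPmem, hPdist⟩ := Metric.mem_closure_iff.mp hF ε hε
  obtain ⟨c, hc⟩ := Finsupp.mem_span_range_iff_exists_finsupp.mp hPmem
  refine ⟨c, fun z => ?_⟩
  obtain ⟨x, rfl⟩ := toC_surj z
  have hPx : P x = ∑ k ∈ c.support, c k * ((toC x : ℂ)) ^ k := by
    rw [← hc]
    rw [Finsupp.sum]
    rw [ContinuousMap.coe_sum, Finset.sum_apply]
    refine Finset.sum_congr rfl fun k _ => ?_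
    rw [ContinuousMap.smul_apply, smul_eq_mul, fourier_apply]
    congr 1
    rw [show AddCircle.toCircle (k • x) = toC (k • x) from rfl, toC_zsmul]
    push_cast
    rfl
  have : ‖F x - P x‖ ≤ ε := by
    have := ContinuousMap.dist_apply_le_dist (f := F) (g := P) x
    rw [Complex.dist_eq] at this
    exact this.trans hPdist.le
  rw [hPx] at this
  exact this

lemma circle_exp_dist (t : ℝ) : ‖(Circle.exp t : ℂ) - 1‖ ≤ |t| := by
  rw [Circle.coe_exp]
  set s : ℝ := t / 2 with hs
  have hts : (t : ℂ) * Complex.I = (s : ℂ) * Complex.I + (s : ℂ) * Complex.I := by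
    push_cast [hs]; ring
  have hsin : (2 * Complex.sin s * Complex.I)
      = Complex.exp ((s:ℂ) * Complex.I) - Complex.exp (-(s:ℂ) * Complex.I) := by
    rw [Complex.sin]
    ring_nf
    rw [Complex.I_sq]
    ring
  have key : Complex.exp ((t:ℂ) * Complex.I) - 1 =
      Complex.exp ((s:ℂ) * Complex.I) * (2 * Complex.sin s * Complex.I) := by
    rw [hsin, mul_sub, ← Complex.exp_add, ← Complex.exp_add, hts]
    norm_num
  rw [key, norm_mul, Complex.norm_exp_ofReal_mul_I, one_mul, norm_mul, norm_mul]
  simp only [Complex.norm_two, Complex.norm_I, mul_one]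
  rw [← Complex.ofReal_sin, Complex.norm_real, Real.norm_eq_abs]
  calc 2 * |Real.sin s| ≤ 2 * |s| := by
        have := Real.abs_sin_le_abs (x := s); linarith
    _ = |t| := by rw [hs, abs_div]; norm_num; ring

lemma exists_int_close (θ : ℝ) (hθ : Irrational θ) (t δ : ℝ) (hδ : 0 < δ) :
    ∃ (m n : ℤ), |(m • θ + n • (1:ℝ)) - t| < δ := by
  have hdense : Dense ((AddSubgroup.closure {θ, (1:ℝ)} : AddSubgroup ℝ) : Set ℝ) := by
    rcases AddSubgroup.dense_or_cyclic (AddSubgroup.closure {θ, (1:ℝ)}) with h | ⟨a, ha⟩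
    · exact h
    · exfalso
      have hθmem : θ ∈ AddSubgroup.closure {θ, (1:ℝ)} :=
        AddSubgroup.subset_closure (Set.mem_insert _ _)
      have h1mem : (1:ℝ) ∈ AddSubgroup.closure {θ, (1:ℝ)} :=
        AddSubgroup.subset_closure (Set.mem_insert_of_mem _ rfl)
      rw [ha] at hθmem h1mem
      obtain ⟨n, hn⟩ := AddSubgroup.mem_closure_singleton.mp hθmem
      obtain ⟨n₁, hn₁⟩ := AddSubgroup.mem_closure_singleton.mp h1mem
      have hn₁0 : (n₁ : ℝ) ≠ 0 := by
        intro h0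
        rw [zsmul_eq_mul] at hn₁
        rw [h0, zero_mul] at hn₁
        exact one_ne_zero hn₁.symm
      apply hθ
      refine ⟨(n : ℚ) / (n₁ : ℚ), ?_⟩
      rw [zsmul_eq_mul] at hn hn₁
      push_cast
      rw [div_eq_iff hn₁0, ← hn, mul_assoc, mul_comm a, hn₁, mul_one]
  obtain ⟨s, hs, hst⟩ := hdense.exists_dist_lt t hδ
  obtain ⟨m, n, hmn⟩ := AddSubgroup.mem_closure_pair.mp hs
  exact ⟨m, n, by rw [hmn]; rw [Real.dist_eq, abs_sub_comm] at hst; exact hst⟩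

lemma exists_pow_close (θ : ℝ) (hθ : Irrational θ) (t ε : ℝ) (hε : 0 < ε) :
    ∃ m : ℤ, ‖((Circle.exp (2 * Real.pi * θ)) ^ m : Circle) - (Circle.exp (2 * Real.pi * t) : ℂ)‖ ≤ ε := by
  have h2π : (0:ℝ) < 2 * Real.pi := by positivity
  obtain ⟨m, n, hmn⟩ := exists_int_close θ hθ t (ε / (2 * Real.pi + 1))
    (by positivity)
  refine ⟨m, ?_⟩
  have hexp : ((Circle.exp (2 * Real.pi * θ)) ^ m : Circle)
      = Circle.exp (2 * Real.pi * (m • θ + n • (1:ℝ))) := by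
    have h1 : ((Circle.exp (2 * Real.pi * θ)) ^ m : Circle) = Circle.exp (m * (2 * Real.pi * θ)) := by
      have := map_zsmul Circle.expHom m (2 * Real.pi * θ)
      have h2 := congrArg Additive.toMul this
      simpa [Circle.expHom, zsmul_eq_mul] using h2.symm
    rw [h1]
    rw [show 2 * Real.pi * (m • θ + n • (1:ℝ)) = m * (2 * Real.pi * θ) + n * (2 * Real.pi) by
      simp [zsmul_eq_mul]; ring]
    rw [Circle.exp_add, Circle.exp_int_mul_two_pi, mul_one]
  rw [hexp]
  set s : ℝ := m • θ + n • (1:ℝ)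
  have hfac : (Circle.exp (2 * Real.pi * s) : ℂ) - (Circle.exp (2 * Real.pi * t) : ℂ)
      = (Circle.exp (2 * Real.pi * t) : ℂ) * ((Circle.exp (2 * Real.pi * (s - t)) : ℂ) - 1) := by
    rw [mul_sub, mul_one, ← Circle.coe_mul, ← Circle.exp_add]
    congr 2
    congr 1
    ring
  rw [hfac, norm_mul, Circle.norm_coe, one_mul]
  calc ‖(Circle.exp (2 * Real.pi * (s - t)) : ℂ) - 1‖ ≤ |2 * Real.pi * (s - t)| :=
        circle_exp_dist _
    _ = 2 * Real.pi * |s - t| := by rw [abs_mul, abs_of_pos h2π]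
    _ ≤ 2 * Real.pi * (ε / (2 * Real.pi + 1)) := by
        have := hmn.le
        exact mul_le_mul_of_nonneg_left this h2π.le
    _ ≤ ε := by
        have hpos : (0:ℝ) < 2 * Real.pi + 1 := by positivity
        have h1 : 2 * Real.pi * (ε / (2 * Real.pi + 1))
            = (2 * Real.pi) / (2 * Real.pi + 1) * ε := by ring
        have h2 : (2 * Real.pi) / (2 * Real.pi + 1) ≤ 1 := by
          rw [div_le_one hpos]; linarith
        nlinarith [hε.le]

lemma circle_coe_zpow (z : Circle) (k : ℤ) : ((z ^ k : Circle) : ℂ) = (z : ℂ) ^ k := by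
  have h1 : ((z ^ k : Circle) : ℂ) = ((Circle.toUnits (z ^ k) : ℂˣ) : ℂ) := rfl
  rw [h1, map_zpow Circle.toUnits z k, Units.val_zpow_eq_zpow_val]
  rfl

lemma circle_exp_zpow (t : ℝ) (k : ℤ) : (Circle.exp t) ^ k = Circle.exp (k * t) := by
  have := map_zsmul Circle.expHom k t
  have h2 := congrArg Additive.toMul this
  simpa [Circle.expHom, zsmul_eq_mul] using h2.symm

lemma distT2_nonneg (p q : Circle × Circle) : 0 ≤ distT2 p q := Real.sqrt_nonneg _

lemma distT2_fst_eq (a b b' : Circle) :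
    distT2 (a, b) (a, b') = ‖(b : ℂ) - (b' : ℂ)‖ := by
  rw [distT2]
  simp only [sub_self, norm_zero]
  rw [zero_pow (by norm_num), zero_add, Real.sqrt_sq (norm_nonneg _)]

lemma core (θ : ℝ) (hθ : Irrational θ) (d : ℤ) (f₁ f₂ : Circle → ℝ)
    (hf₁ : Continuous f₁) (hf₂ : Continuous f₂) (ε : ℝ) (hε : 0 < ε) :
    ∃ σ : (Circle × Circle) ≃ₜ (Circle × Circle), MeasurePreserving σ m2 m2 ∧
      ∀ x, distT2 (σ (Phi θ d f₁ (σ.symm x))) (Phi θ d f₂ x) ≤ ε := by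
  have hπ : (0:ℝ) < 2 * Real.pi := by positivity
  set u : Circle := Circle.exp (2 * Real.pi * θ) with hu_def
  -- u is not a root of unity
  have huC : ∀ k : ℤ, k ≠ 0 → (u : ℂ) ^ k ≠ 1 := by
    intro k hk h1
    have h2 : ((u ^ k : Circle) : ℂ) = ((1 : Circle) : ℂ) := by
      rw [circle_coe_zpow]; exact h1
    have h3 : u ^ k = 1 := Subtype.coe_injective h2
    rw [hu_def, circle_exp_zpow] at h3
    obtain ⟨n, hn⟩ := Circle.exp_eq_one.mp h3
    apply hθ
    refine ⟨(n : ℚ) / (k : ℚ), ?_⟩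
    have hkR : (k : ℝ) ≠ 0 := Int.cast_ne_zero.mpr hk
    have h5 : (k:ℝ) * θ = n := by
      have h6 : 2 * Real.pi * ((k:ℝ) * θ) = 2 * Real.pi * (n:ℝ) := by
        ring_nf; ring_nf at hn; linarith
      exact mul_left_cancel₀ (ne_of_gt hπ) h6
    push_cast
    rw [div_eq_iff hkR]
    linear_combination -h5
  -- trigonometric approximation of f₂ - f₁
  set ε₁ : ℝ := ε / (2 * (2 * Real.pi + 1)) with hε₁def
  have hε₁ : 0 < ε₁ := by positivity
  obtain ⟨c, hc⟩ := trig_approx (fun z => f₂ z - f₁ z)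
    (hf₂.sub hf₁) ε₁ hε₁
  set P : Circle → ℂ := fun z => ∑ k ∈ c.support, c k * (z : ℂ) ^ k with hPdef
  set P0 : ℝ := (c 0).re with hP0def
  -- the coboundary solution
  set g : Circle → ℂ :=
    fun z => ∑ k ∈ c.support, (if k = 0 then 0 else c k / ((u : ℂ) ^ k - 1)) * (z : ℂ) ^ k
    with hgdef
  have hgcont : Continuous g := by
    apply continuous_finset_sum
    intro k _
    apply Continuous.mul continuous_const
    have : (fun z : Circle => (z : ℂ) ^ k) = fun z : Circle => ((z ^ k : Circle) : ℂ) := by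
      funext z; rw [circle_coe_zpow]
    rw [this]
    exact continuous_induced_dom.comp (continuous_zpow k)
  have hgcob : ∀ z : Circle, g (z * u) - g z = P z - c 0 := by
    intro z
    rw [hgdef, hPdef]
    simp only
    rw [← Finset.sum_sub_distrib]
    have hterm : ∀ k ∈ c.support,
        (if k = 0 then 0 else c k / ((u : ℂ) ^ k - 1)) * ((z * u : Circle) : ℂ) ^ k
          - (if k = 0 then 0 else c k / ((u : ℂ) ^ k - 1)) * (z : ℂ) ^ k
        = c k * (z : ℂ) ^ k - (if k = 0 then c k * (z : ℂ) ^ k else 0) := by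
      intro k _
      by_cases hk : k = 0
      · subst hk; simp
      · rw [if_neg hk, if_neg hk, Circle.coe_mul, mul_zpow, sub_zero]
        have hne : (u:ℂ)^k - 1 ≠ 0 := sub_ne_zero.mpr (huC k hk)
        field_simp
    rw [Finset.sum_congr rfl hterm, Finset.sum_sub_distrib]
    congr 1
    rw [Finset.sum_ite_eq' c.support 0 (fun k => c k * (z:ℂ)^k)]
    by_cases h0 : 0 ∈ c.support
    · rw [if_pos h0, zpow_zero, mul_one]
    · rw [if_neg h0, Finsupp.notMem_support_iff.mp h0]
  set G : Circle → ℝ := fun z => (g z).re with hGdef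
  have hGcont : Continuous G := Complex.continuous_re.comp hgcont
  -- choose the winding number m
  obtain ⟨m, hm⟩ := exists_pow_close θ hθ P0 (ε / 2) (by positivity)
  -- the conjugating homeomorphism
  set w : Circle → Circle := fun z => z ^ m * Circle.exp (2 * Real.pi * G z) with hwdef
  have hwcont : Continuous w :=
    (continuous_zpow m).mul (Circle.exp.continuous.comp (continuous_const.mul hGcont))
  refine ⟨skewH w hwcont, skewH_mp w hwcont, ?_⟩
  rintro ⟨ξ, ζ⟩
  -- compute both sides
  have hsymm : (skewH w hwcont).symm (ξ, ζ) = (ξ, ζ * (w ξ)⁻¹) := rfl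
  rw [hsymm]
  have hA : (skewH w hwcont) (Phi θ d f₁ (ξ, ζ * (w ξ)⁻¹))
      = (ξ * u, (ζ * (w ξ)⁻¹ * ξ ^ d * Circle.exp (2 * Real.pi * f₁ ξ)) * w (ξ * u)) := rfl
  have hB : Phi θ d f₂ (ξ, ζ) = (ξ * u, ζ * ξ ^ d * Circle.exp (2 * Real.pi * f₂ ξ)) := rfl
  rw [hA, hB, distT2_fst_eq]
  -- the quotient
  set r : ℝ := G (ξ * u) - G ξ + f₁ ξ - f₂ ξ with hrdef
  set q : Circle := u ^ m * Circle.exp (2 * Real.pi * r) with hqdef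
  set B2 : Circle := ζ * ξ ^ d * Circle.exp (2 * Real.pi * f₂ ξ) with hB2def
  have hfactor : ((ζ * (w ξ)⁻¹ * ξ ^ d * Circle.exp (2 * Real.pi * f₁ ξ)) * w (ξ * u) : Circle)
      = B2 * q := by
    apply Subtype.coe_injective
    have hsplit : Circle.exp (2 * Real.pi * r)
        = Circle.exp (2 * Real.pi * G (ξ * u)) * (Circle.exp (2 * Real.pi * G ξ))⁻¹
          * Circle.exp (2 * Real.pi * f₁ ξ) * (Circle.exp (2 * Real.pi * f₂ ξ))⁻¹ := by
      rw [← Circle.exp_neg, ← Circle.exp_neg, ← Circle.exp_add, ← Circle.exp_add,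
        ← Circle.exp_add]
      congr 1
      rw [hrdef]; ring
    rw [hqdef, hsplit, hB2def, hwdef]
    simp only [Circle.coe_mul, Circle.coe_inv, mul_zpow]
    field_simp
  rw [hfactor, Circle.coe_mul]
  rw [show ((B2 : ℂ) * (q : ℂ) - (B2 : ℂ)) = (B2 : ℂ) * ((q : ℂ) - 1) by ring]
  rw [norm_mul, Circle.norm_coe, one_mul]
  -- estimate |q - 1|
  have hq1 : ‖(q : ℂ) - 1‖ ≤ ε := by
    have hsplit2 : ((q : ℂ) - 1)
        = (Circle.exp (2 * Real.pi * r) : ℂ) * ((u ^ m : Circle) - (Circle.exp (2 * Real.pi * P0) : ℂ))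
          + ((Circle.exp (2 * Real.pi * (r + P0)) : ℂ) - 1) := by
      have hadd : Circle.exp (2 * Real.pi * (r + P0))
          = Circle.exp (2 * Real.pi * r) * Circle.exp (2 * Real.pi * P0) := by
        rw [← Circle.exp_add]; congr 1; ring
      rw [hqdef, hadd]
      push_cast [Circle.coe_mul]
      ring
    rw [hsplit2]
    have h1 : ‖(Circle.exp (2 * Real.pi * r) : ℂ)
        * ((u ^ m : Circle) - (Circle.exp (2 * Real.pi * P0) : ℂ))‖ ≤ ε / 2 := by
      rw [norm_mul, Circle.norm_coe, one_mul]
      exact hm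
    have h2 : ‖(Circle.exp (2 * Real.pi * (r + P0)) : ℂ) - 1‖ ≤ ε / 2 := by
      have hrp : r + P0 = -((f₂ ξ - f₁ ξ) - (P ξ).re + ((P ξ).re - (G (ξ * u) - G ξ + P0)) ) := by
        rw [hrdef]; ring
      have hGdiff : G (ξ * u) - G ξ = (P ξ).re - P0 := by
        rw [hGdef]
        simp only
        rw [← Complex.sub_re, hgcob ξ, Complex.sub_re, hP0def]
      have habs : |r + P0| ≤ ε₁ := by
        rw [hrp, hGdiff, abs_neg]
        have : (f₂ ξ - f₁ ξ) - (P ξ).re + ((P ξ).re - ((P ξ).re - P0 + P0)) = (f₂ ξ - f₁ ξ) - (P ξ).re := by ring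
        rw [this]
        have := hc ξ
        calc |(f₂ ξ - f₁ ξ) - (P ξ).re| = |(((f₂ ξ - f₁ ξ : ℝ) : ℂ) - P ξ).re| := by
              rw [Complex.sub_re, Complex.ofReal_re]
          _ ≤ ‖((f₂ ξ - f₁ ξ : ℝ) : ℂ) - P ξ‖ := Complex.abs_re_le_norm _
          _ ≤ ε₁ := by
              have h := hc ξ
              push_cast at h ⊢
              convert h using 2
      calc ‖(Circle.exp (2 * Real.pi * (r + P0)) : ℂ) - 1‖
          ≤ |2 * Real.pi * (r + P0)| := circle_exp_dist _
        _ = 2 * Real.pi * |r + P0| := by rw [abs_mul, abs_of_pos hπ]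
        _ ≤ 2 * Real.pi * ε₁ := mul_le_mul_of_nonneg_left habs hπ.le
        _ ≤ ε / 2 := by
            rw [hε₁def]
            rw [show 2 * Real.pi * (ε / (2 * (2 * Real.pi + 1)))
              = (2 * Real.pi) / (2 * Real.pi + 1) * (ε / 2) by
                have hx : (2 * Real.pi + 1) ≠ 0 := by positivity
                field_simp]
            have h2 : (2 * Real.pi) / (2 * Real.pi + 1) ≤ 1 := by
              rw [div_le_one (by positivity)]; linarith
            nlinarith [h2, hε.le]
    calc ‖_‖ ≤ _ + _ := norm_add_le _ _
      _ ≤ ε / 2 + ε / 2 := add_le_add h1 h2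
      _ = ε := by ring
  exact hq1

lemma phi_mod (θ θ' : ℝ) (k : ℤ) (hk : θ - θ' = k) (d : ℤ) (f : Circle → ℝ) :
    Phi θ d f = Phi θ' d f := by
  have : Circle.exp (2 * Real.pi * θ) = Circle.exp (2 * Real.pi * θ') := by
    have hθ : θ = θ' + k := by linarith [hk]
    rw [hθ, show 2 * Real.pi * (θ' + k) = 2 * Real.pi * θ' + k * (2 * Real.pi) by ring,
      Circle.exp_add, Circle.exp_int_mul_two_pi, mul_one]
  funext p
  rw [Phi, Phi, this]

lemma flip2_conj (θ : ℝ) (d : ℤ) (f : Circle → ℝ) (x : Circle × Circle) :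
    flip2H (Phi θ d f (flip2H.symm x)) = Phi θ (-d) (fun ξ => -(f ξ)) x := by
  show (x.1 * Circle.exp (2 * Real.pi * θ),
      (x.2⁻¹ * x.1 ^ d * Circle.exp (2 * Real.pi * f x.1))⁻¹) = _
  rw [Phi]
  refine Prod.ext rfl ?_
  show (x.2⁻¹ * x.1 ^ d * Circle.exp (2 * Real.pi * f x.1))⁻¹
      = x.2 * x.1 ^ (-d) * Circle.exp (2 * Real.pi * -(f x.1))
  rw [mul_inv, mul_inv, inv_inv, zpow_neg,
    show 2 * Real.pi * -(f x.1) = -(2 * Real.pi * f x.1) by ring, Circle.exp_neg]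

lemma flip1_conj (θ : ℝ) (d : ℤ) (f : Circle → ℝ) (x : Circle × Circle) :
    flip1H (Phi θ d f (flip1H.symm x)) = Phi (-θ) (-d) (fun ξ => f ξ⁻¹) x := by
  show ((x.1⁻¹ * Circle.exp (2 * Real.pi * θ))⁻¹,
      x.2 * (x.1⁻¹) ^ d * Circle.exp (2 * Real.pi * f x.1⁻¹)) = _
  rw [Phi]
  refine Prod.ext ?_ ?_
  · show (x.1⁻¹ * Circle.exp (2 * Real.pi * θ))⁻¹
        = x.1 * Circle.exp (2 * Real.pi * -θ)
    rw [mul_inv, inv_inv, show 2 * Real.pi * -θ = -(2 * Real.pi * θ) by ring, Circle.exp_neg]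
  · show x.2 * (x.1⁻¹) ^ d * Circle.exp (2 * Real.pi * f x.1⁻¹)
        = x.2 * x.1 ^ (-d) * Circle.exp (2 * Real.pi * f x.1⁻¹)
    rw [inv_zpow, zpow_neg]

lemma flip2_iso (x y : Circle × Circle) : distT2 (flip2H x) (flip2H y) = distT2 x y := by
  show distT2 (x.1, x.2⁻¹) (y.1, y.2⁻¹) = distT2 x y
  rw [distT2, distT2]
  congr 2
  rw [Circle.coe_inv_eq_conj, Circle.coe_inv_eq_conj, ← map_sub, Complex.norm_conj]

lemma flip1_iso (x y : Circle × Circle) : distT2 (flip1H x) (flip1H y) = distT2 x y := by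
  show distT2 (x.1⁻¹, x.2) (y.1⁻¹, y.2) = distT2 x y
  rw [distT2, distT2]
  congr 2
  rw [Circle.coe_inv_eq_conj, Circle.coe_inv_eq_conj, ← map_sub, Complex.norm_conj]

lemma exists_conj (θ₁ θ₂ : ℝ) (d₁ d₂ : ℤ) (f₁ : Circle → ℝ) (hf₁ : Continuous f₁)
    (hθ : (∃ k : ℤ, θ₁ - θ₂ = k) ∨ (∃ k : ℤ, θ₁ + θ₂ = k)) (hd : |d₁| = |d₂|) :
    ∃ (σc : (Circle × Circle) ≃ₜ (Circle × Circle)) (f₁' : Circle → ℝ),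
      Continuous f₁' ∧ MeasurePreserving σc m2 m2 ∧
      (∀ x y, distT2 (σc.symm x) (σc.symm y) = distT2 x y) ∧
      (∀ x, σc (Phi θ₁ d₁ f₁ (σc.symm x)) = Phi θ₂ d₂ f₁' x) := by
  rcases abs_eq_abs.mp hd with hdd | hdd
  · rcases hθ with ⟨k, hk⟩ | ⟨k, hk⟩
    · -- same angle, same d : identity conjugacy
      refine ⟨Homeomorph.refl _, f₁, hf₁, MeasurePreserving.id m2, fun x y => rfl, fun x => ?_⟩
      show Phi θ₁ d₁ f₁ x = Phi θ₂ d₂ f₁ x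
      rw [phi_mod θ₁ θ₂ k hk, hdd]
    · -- opposite angle, same sign of d : flip1 then flip2
      refine ⟨flip1H.trans flip2H, fun ξ => -(f₁ ξ⁻¹),
        (hf₁.comp continuous_inv).neg, flip2H_mp.comp flip1H_mp,
        fun x y => ?_, fun x => ?_⟩
      · show distT2 (flip1H.symm (flip2H.symm x)) (flip1H.symm (flip2H.symm y)) = distT2 x y
        have h1 : ∀ a b, distT2 (flip1H.symm a) (flip1H.symm b) = distT2 a b := fun a b =>
          flip1_iso a b
        have h2 : ∀ a b, distT2 (flip2H.symm a) (flip2H.symm b) = distT2 a b := fun a b =>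
          flip2_iso a b
        rw [h1, h2]
      · show flip2H (flip1H (Phi θ₁ d₁ f₁ (flip1H.symm (flip2H.symm x)))) = Phi θ₂ d₂ _ x
        rw [flip1_conj θ₁ d₁ f₁ (flip2H.symm x), flip2_conj]
        rw [phi_mod (-θ₁) θ₂ (-k) (by push_cast; linarith), neg_neg, hdd]
  · rcases hθ with ⟨k, hk⟩ | ⟨k, hk⟩
    · -- same angle, opposite d : flip2
      refine ⟨flip2H, fun ξ => -(f₁ ξ), hf₁.neg, flip2H_mp, fun x y => flip2_iso x y,
        fun x => ?_⟩
      rw [flip2_conj, phi_mod θ₁ θ₂ k hk, show -d₁ = d₂ by omega]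
    · -- opposite angle, opposite d : flip1
      refine ⟨flip1H, fun ξ => f₁ ξ⁻¹, hf₁.comp continuous_inv, flip1H_mp,
        fun x y => flip1_iso x y, fun x => ?_⟩
      rw [flip1_conj, phi_mod (-θ₁) θ₂ (-k) (by push_cast; linarith),
        show -d₁ = d₂ by omega]


/-- A transformation of `𝕋²` is uniquely ergodic if `m₂` is its unique invariant
Borel probability measure. -/
def UniquelyErgodic (α : Circle × Circle → Circle × Circle) : Prop :=
  ∀ μ : Measure (Circle × Circle), IsProbabilityMeasure μ → Measure.map α μ = μ → μ = m2

theorem stmt4 (θ₁ θ₂ : ℝ) (hθ₁ : Irrational θ₁) (hθ₂ : Irrational θ₂)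
    (d₁ d₂ : ℤ) (hd₁ : d₁ ≠ 0) (hd₂ : d₂ ≠ 0)
    (f₁ f₂ : Circle → ℝ) (hf₁ : Continuous f₁) (hf₂ : Continuous f₂)
    (hα : UniquelyErgodic (Phi θ₁ d₁ f₁)) (hβ : UniquelyErgodic (Phi θ₂ d₂ f₂))
    (hθ : (∃ k : ℤ, θ₁ - θ₂ = k) ∨ (∃ k : ℤ, θ₁ + θ₂ = k))
    (hd : |d₁| = |d₂|) :
    ∃ σ γ : ℕ → (Circle × Circle) ≃ₜ (Circle × Circle),
      Tendsto (fun n => ⨆ x : Circle × Circle,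
          distT2 (σ n (Phi θ₁ d₁ f₁ ((σ n).symm x))) (Phi θ₂ d₂ f₂ x)) atTop (𝓝 0) ∧
      Tendsto (fun n => ⨆ x : Circle × Circle,
          distT2 (γ n (Phi θ₂ d₂ f₂ ((γ n).symm x))) (Phi θ₁ d₁ f₁ x)) atTop (𝓝 0) ∧
      (∀ n, ∀ S : Set (Circle × Circle), MeasurableSet S → m2 (σ n '' S) = m2 S) ∧
      (∀ n, ∀ S : Set (Circle × Circle), MeasurableSet S → m2 (γ n '' S) = m2 S) := by
  obtain ⟨σc, f₁', hf₁', hmpc, hiso, hconj⟩ := exists_conj θ₁ θ₂ d₁ d₂ f₁ hf₁ hθ hd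
  have hone : ∀ n : ℕ, (0:ℝ) < 1 / (n + 1) := fun n => by positivity
  have hs : ∀ n : ℕ, ∃ s : (Circle × Circle) ≃ₜ (Circle × Circle),
      MeasurePreserving s m2 m2 ∧
      ∀ x, distT2 (s (Phi θ₂ d₂ f₁' (s.symm x))) (Phi θ₂ d₂ f₂ x) ≤ 1 / (n + 1) :=
    fun n => core θ₂ hθ₂ d₂ f₁' f₂ hf₁' hf₂ (1 / (n + 1)) (hone n)
  have ht : ∀ n : ℕ, ∃ t : (Circle × Circle) ≃ₜ (Circle × Circle),
      MeasurePreserving t m2 m2 ∧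
      ∀ x, distT2 (t (Phi θ₂ d₂ f₂ (t.symm x))) (Phi θ₂ d₂ f₁' x) ≤ 1 / (n + 1) :=
    fun n => core θ₂ hθ₂ d₂ f₂ f₁' hf₂ hf₁' (1 / (n + 1)) (hone n)
  choose s hs1 hs2 using hs
  choose t ht1 ht2 using ht
  have halpha : ∀ x, Phi θ₁ d₁ f₁ x = σc.symm (Phi θ₂ d₂ f₁' (σc x)) := by
    intro x
    have := hconj (σc x)
    rw [Homeomorph.symm_apply_apply] at this
    rw [← this, Homeomorph.symm_apply_apply]
  refine ⟨fun n => σc.trans (s n), fun n => (t n).trans σc.symm, ?_, ?_, ?_, ?_⟩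
  · -- first convergence
    refine tendsto_of_tendsto_of_tendsto_of_le_of_le (g := fun _ : ℕ => (0:ℝ))
      (h := fun n : ℕ => 1 / ((n:ℝ) + 1)) tendsto_const_nhds
      tendsto_one_div_add_atTop_nhds_zero_nat
      (fun n => Real.iSup_nonneg fun x => distT2_nonneg _ _) ?_
    intro n
    apply ciSup_le
    intro x
    have hx : (σc.trans (s n)) (Phi θ₁ d₁ f₁ ((σc.trans (s n)).symm x))
        = (s n) (Phi θ₂ d₂ f₁' ((s n).symm x)) := by
      rw [Homeomorph.trans_apply]
      congr 1
      rw [show (σc.trans (s n)).symm x = σc.symm ((s n).symm x) from rfl]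
      exact hconj ((s n).symm x)
    rw [hx]
    exact hs2 n x
  · -- second convergence
    refine tendsto_of_tendsto_of_tendsto_of_le_of_le (g := fun _ : ℕ => (0:ℝ))
      (h := fun n : ℕ => 1 / ((n:ℝ) + 1)) tendsto_const_nhds
      tendsto_one_div_add_atTop_nhds_zero_nat
      (fun n => Real.iSup_nonneg fun x => distT2_nonneg _ _) ?_
    intro n
    apply ciSup_le
    intro x
    have hx : ((t n).trans σc.symm) (Phi θ₂ d₂ f₂ (((t n).trans σc.symm).symm x))
        = σc.symm ((t n) (Phi θ₂ d₂ f₂ ((t n).symm (σc x)))) := rfl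
    rw [hx, halpha x, hiso]
    exact ht2 n (σc x)
  · -- measure preservation of σ
    intro n S hS
    have hcomp : MeasurePreserving (⇑(σc.trans (s n))) m2 m2 := by
      have h : ⇑(σc.trans (s n)) = ⇑(s n) ∘ ⇑σc := rfl
      rw [h]; exact (hs1 n).comp hmpc
    exact image_meas _ hcomp S hS
  · -- measure preservation of γ
    intro n S hS
    have hcomp : MeasurePreserving (⇑((t n).trans σc.symm)) m2 m2 := by
      have h : ⇑((t n).trans σc.symm) = ⇑σc.symm ∘ ⇑(t n) := rfl
      rw [h]; exact (mp_symm σc hmpc).comp (ht1 n)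
    exact image_meas _ hcomp S hS

end
end

section
/- Let X be an infinite compact metric space, h : X → X a minimal homeomorphism, and Y ⊂ X a closed set with nonempty interior. For y ∈ Y set r(y) = min{n ≥ 1 : hⁿ(y) ∈ Y} (which is finite, with sup_{y∈Y} r(y) < ∞). Let n(0) < n(1) < ⋯ < n(l) be the distinct values taken by r on Y, and for 0 ≤ k ≤ l set Y_k = closure({y ∈ Y : r(y) = n(k)}) and Y_k° = interior({y ∈ Y : r(y) = n(k)}). Then: (1) the sets h^j(Y_k°), for 0 ≤ k ≤ l and 1 ≤ j ≤ n(k), are pairwise disjoint; (2) ⋃_{k=0}^{l} ⋃_{j=1}^{n(k)} h^j(Y_k) = X; (3) ⋃_{k=0}^{l} h^{n(k)}(Y_k) = Y. -/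
/-- A homeomorphism `h` of a topological space `X` is *minimal* if the only closed
subsets `F ⊆ X` with `h(F) = F` are `∅` and `X`. -/
def IsMinimalHomeo {X : Type*} [TopologicalSpace X] (h : X ≃ₜ X) : Prop :=
  ∀ F : Set X, IsClosed F → h '' F = F → F = ∅ ∨ F = Set.univ

/-- The Rokhlin tower ("first return time") decomposition for a minimal homeomorphism
`h` of an infinite compact metric space over a closed set `Y` with nonempty interior.
Here `r y = min {n ≥ 1 : hⁿ(y) ∈ Y}` is the first return time, `nvals 0 < ⋯ < nvals l`
are the distinct values of `r` on `Y`, `Yk k` is the closure of `{y ∈ Y : r y = nvals k}`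
and `Yko k` its interior. -/
theorem stmt7 {X : Type*} [MetricSpace X] [CompactSpace X] [Infinite X]
    (h : X ≃ₜ X) (hmin : IsMinimalHomeo h)
    (Y : Set X) (hY : IsClosed Y) (hYint : (interior Y).Nonempty)
    (r : X → ℕ)
    (hr : ∀ y ∈ Y, 1 ≤ r y ∧ (⇑h)^[r y] y ∈ Y ∧
      ∀ m : ℕ, 1 ≤ m → m < r y → (⇑h)^[m] y ∉ Y)
    (l : ℕ) (nvals : ℕ → ℕ)
    (hmono : StrictMonoOn nvals (Set.Iic l))
    (hvals : nvals '' Set.Iic l = r '' Y)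
    (Yk Yko : ℕ → Set X)
    (hYk : ∀ k, Yk k = closure {y ∈ Y | r y = nvals k})
    (hYko : ∀ k, Yko k = interior {y ∈ Y | r y = nvals k}) :
    (∀ k ∈ Set.Iic l, ∀ k' ∈ Set.Iic l,
      ∀ j ∈ Set.Icc 1 (nvals k), ∀ j' ∈ Set.Icc 1 (nvals k'),
        (k, j) ≠ (k', j') →
          Disjoint ((⇑h)^[j] '' Yko k) ((⇑h)^[j'] '' Yko k')) ∧
    (⋃ k ∈ Set.Iic l, ⋃ j ∈ Set.Icc 1 (nvals k), (⇑h)^[j] '' Yk k) = Set.univ ∧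
    (⋃ k ∈ Set.Iic l, (⇑h)^[nvals k] '' Yk k) = Y := by
  classical
  -- iterate inverse facts
  have hinv : ∀ (i : ℕ) (x : X), (⇑h)^[i] ((⇑h.symm)^[i] x) = x :=
    fun i => (Function.LeftInverse.iterate h.apply_symm_apply i)
  have hinv' : ∀ {i j : ℕ}, i ≤ j → ∀ x : X,
      (⇑h)^[i] ((⇑h.symm)^[j] x) = (⇑h.symm)^[j - i] x := by
    intro i j hij x
    conv_lhs => rw [show j = i + (j - i) by omega, Function.iterate_add_apply]
    exact hinv i _
  -- key dynamical lemma: every backward orbit enters interior Y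
  have key0 : ∀ x : X, ∃ n : ℕ, (⇑h.symm)^[n] x ∈ interior Y := by
    by_contra hc
    push_neg at hc
    obtain ⟨x0, hx0⟩ := hc
    set F : Set X := {x | ∀ n : ℕ, (⇑h.symm)^[n] x ∉ interior Y} with hF
    have hFclosed : IsClosed F := by
      have : F = ⋂ n : ℕ, ((⇑h.symm)^[n]) ⁻¹' (interior Y)ᶜ := by
        ext x; simp [hF]
      rw [this]
      exact isClosed_iInter fun n =>
        (isOpen_interior.isClosed_compl).preimage (h.symm.continuous.iterate n)
    have hFinv : ∀ x ∈ F, h.symm x ∈ F := by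
      intro x hx n
      rw [← Function.iterate_succ_apply]
      exact hx (n + 1)
    set C : ℕ → Set X := fun n => (⇑h.symm)^[n] '' F with hC
    have hC0 : C 0 = F := by simp [hC]
    have hCsucc : ∀ n, C (n + 1) = h.symm '' C n := by
      intro n
      simp only [hC, Function.iterate_succ', Set.image_comp]
    have hCanti : ∀ n, C (n + 1) ⊆ C n := by
      intro n x hx
      rw [hCsucc] at hx
      obtain ⟨y, hy, rfl⟩ := hx
      obtain ⟨z, hz, rfl⟩ := hy
      exact ⟨h.symm z, hFinv z hz, by rw [← Function.iterate_succ_apply, Function.iterate_succ_apply']⟩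
    have hCcompact : ∀ n, IsCompact (C n) :=
      fun n => (hFclosed.isCompact).image (h.symm.continuous.iterate n)
    have hCclosed : ∀ n, IsClosed (C n) := fun n => (hCcompact n).isClosed
    have hCne : ∀ n, (C n).Nonempty := fun n => ⟨_, ⟨x0, hx0, rfl⟩⟩
    set K : Set X := ⋂ n, C n with hK
    have hKne : K.Nonempty :=
      IsCompact.nonempty_iInter_of_sequence_nonempty_isCompact_isClosed C hCanti hCne
        (hCcompact 0) hCclosed
    have hKinv : h '' K = K := by
      apply Set.Subset.antisymm
      · rintro _ ⟨x, hx, rfl⟩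
        apply Set.mem_iInter.2
        intro n
        have hx1 : x ∈ C (n + 1) := Set.mem_iInter.1 hx (n + 1)
        rw [hCsucc] at hx1
        obtain ⟨y, hy, rfl⟩ := hx1
        rwa [h.apply_symm_apply]
      · intro x hx
        refine ⟨h.symm x, ?_, h.apply_symm_apply x⟩
        apply Set.mem_iInter.2
        intro n
        exact hCanti n (by rw [hCsucc]; exact ⟨x, Set.mem_iInter.1 hx n, rfl⟩)
    rcases hmin K (isClosed_iInter hCclosed) hKinv with h1 | h1
    · exact hKne.ne_empty h1
    · obtain ⟨u, hu⟩ := hYint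
      have : u ∈ F := by
        rw [← hC0]
        exact Set.mem_iInter.1 (h1 ▸ Set.mem_univ u : u ∈ K) 0
      exact this 0 hu
  have key : ∀ x : X, ∃ n : ℕ, 1 ≤ n ∧ (⇑h.symm)^[n] x ∈ Y := by
    intro x
    obtain ⟨n, hn⟩ := key0 (h.symm x)
    refine ⟨n + 1, Nat.le_add_left 1 n, ?_⟩
    rw [Function.iterate_succ_apply]
    exact interior_subset hn
  -- the main pointwise structure lemma
  have main : ∀ x : X, ∃ z ∈ Y, ∃ k ≤ l, ∃ j, 1 ≤ j ∧ j ≤ nvals k ∧ r z = nvals k ∧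
      (⇑h)^[j] z = x ∧ (x ∈ Y → j = nvals k) := by
    intro x
    set P : ℕ → Prop := fun n => 1 ≤ n ∧ (⇑h.symm)^[n] x ∈ Y with hP
    have hPex : ∃ n, P n := key x
    set j := Nat.find hPex with hj
    obtain ⟨hj1, hzY⟩ := Nat.find_spec hPex
    set z := (⇑h.symm)^[j] x with hz
    obtain ⟨hrz1, hrzY, hrzmin⟩ := hr z hzY
    have hjle : j ≤ r z := by
      by_contra hlt
      push_neg at hlt
      have h1 : (⇑h.symm)^[j - r z] x ∈ Y := by
        rw [← hinv' (le_of_lt hlt) x]; exact hrzY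
      have h2 : 1 ≤ j - r z := by omega
      have := Nat.find_min hPex (show j - r z < j by omega) ⟨h2, h1⟩
      exact this
    have hrzim : r z ∈ nvals '' Set.Iic l := by
      rw [hvals]; exact ⟨z, hzY, rfl⟩
    obtain ⟨k, hkl, hk⟩ := hrzim
    refine ⟨z, hzY, k, hkl, j, hj1, hk ▸ hjle, hk.symm, hinv j x, ?_⟩
    intro hxY
    have hge : r z ≤ j := by
      by_contra hlt
      push_neg at hlt
      exact hrzmin j hj1 hlt (by rw [hinv j x]; exact hxY)
    omega
  constructor
  · -- disjointness
    have aux : ∀ k ∈ Set.Iic l, ∀ k' ∈ Set.Iic l,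
        ∀ j ∈ Set.Icc 1 (nvals k), ∀ j' ∈ Set.Icc 1 (nvals k'),
          j ≤ j' → (k, j) ≠ (k', j') →
            ∀ x, x ∈ (⇑h)^[j] '' Yko k → x ∈ (⇑h)^[j'] '' Yko k' → False := by
      rintro k hkl k' hkl' j ⟨hj1, hj2⟩ j' ⟨hj1', hj2'⟩ hle hne x ⟨y, hy, hxy⟩ ⟨y', hy', hxy'⟩
      rw [hYko] at hy hy'
      replace hy := interior_subset hy
      replace hy' := interior_subset hy'
      obtain ⟨hyY, hyr⟩ := hy
      obtain ⟨hyY', hyr'⟩ := hy'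
      have heq : y = (⇑h)^[j' - j] y' := by
        have : (⇑h)^[j] y = (⇑h)^[j] ((⇑h)^[j' - j] y') := by
          rw [hxy, ← hxy', ← Function.iterate_add_apply]
          congr 1
          omega
        exact (Function.Injective.iterate h.injective j) this
      rcases Nat.eq_or_lt_of_le hle with hjj | hjj
      · -- j = j', so y = y', so k = k', contradiction
        have : y = y' := by rw [heq, hjj]; simp
        have hkk : nvals k = nvals k' := by rw [← hyr, ← hyr', this]
        have : k = k' := hmono.injOn hkl hkl' hkk
        exact hne (by rw [this, hjj])
      · -- 1 ≤ j' - j < nvals k', but h^[j'-j] y' = y ∈ Y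
        obtain ⟨_, _, hmin'⟩ := hr y' hyY'
        exact hmin' (j' - j) (by omega) (by omega) (heq ▸ hyY)
    intro k hkl k' hkl' j hj j' hj' hne
    rw [Set.disjoint_left]
    intro x hx hx'
    rcases le_total j j' with hle | hle
    · exact aux k hkl k' hkl' j hj j' hj' hle hne x hx hx'
    · exact aux k' hkl' k hkl j' hj' j hj hle hne.symm x hx' hx
  constructor
  · -- covering of X
    apply Set.eq_univ_of_forall
    intro x
    obtain ⟨z, hzY, k, hkl, j, hj1, hj2, hrz, hjz, _⟩ := main x
    refine Set.mem_biUnion hkl (Set.mem_biUnion (Set.mem_Icc.2 ⟨hj1, hj2⟩) ?_)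
    exact ⟨z, by rw [hYk]; exact subset_closure ⟨hzY, hrz⟩, hjz⟩
  · -- tower tops equal Y
    apply Set.Subset.antisymm
    · intro x hx
      obtain ⟨S, ⟨k, rfl⟩, hxS⟩ := hx
      simp only [Set.mem_iUnion, Set.mem_image] at hxS
      obtain ⟨hkl, y, hyYk, rfl⟩ := hxS
      rw [hYk] at hyYk
      have h1 : (⇑h)^[nvals k] '' closure {y ∈ Y | r y = nvals k} ⊆
          closure ((⇑h)^[nvals k] '' {y ∈ Y | r y = nvals k}) :=
        image_closure_subset_closure_image (h.continuous.iterate _)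
      have h2 : (⇑h)^[nvals k] '' {y ∈ Y | r y = nvals k} ⊆ Y := by
        rintro _ ⟨w, ⟨hwY, hwr⟩, rfl⟩
        rw [← hwr]
        exact (hr w hwY).2.1
      exact hY.closure_subset ((closure_mono h2) (h1 ⟨y, hyYk, rfl⟩))
    · intro x hxY
      obtain ⟨z, hzY, k, hkl, j, hj1, hj2, hrz, hjz, hjn⟩ := main x
      rw [hjn hxY] at hjz
      exact Set.mem_biUnion hkl ⟨z, by rw [hYk]; exact subset_closure ⟨hzY, hrz⟩, hjz⟩
end

section
/- Let α : 𝕋 → 𝕋 be a minimal homeomorphism of the circle and let n > 1 be an integer. Then there exist finitely many pairwise disjoint nonempty open arcs J₁, …, J_k of 𝕋 and positive integers h(1), …, h(k) such that: (1) the sets α^j(J_i), for 1 ≤ i ≤ k and 0 ≤ j ≤ h(i) − 1, are pairwise disjoint; (2) h(i) ≥ n for every 1 ≤ i ≤ k; (3) the complement 𝕋 ∖ ⋃_{i=1}^{k} ⋃_{j=0}^{h(i)−1} α^j(J_i) is a finite set. -/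
/-!
Take a small arc `U` around a point `x` such that `U, αU, …, α^{n-1}U` are pairwise disjoint,
which is possible because a minimal homeomorphism of the circle has no periodic points.
By minimality and compactness every point enters `U` within a bounded time `N`, so the first
return time to `U` is bounded, is at least `n` on `U`, and is locally constant away from the
finite set `F` of points whose first `N` iterates meet an endpoint of `U`. Cutting `U` at `F`
gives finitely many open arcs `J i` on which the return time is a constant `h i`. The towers
`α^j (J i)`, `j < h i`, are disjoint because `α` is injective and `h i` is the *first* return,
and pulling any point back to its last visit to `U` shows that everything outside the towers
lies on the first `N` iterates of `F`.
-/

/-- An *open arc* of the circle: a nonempty connected open proper subset. -/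
def IsOpenArc (J : Set Circle) : Prop :=
  IsOpen J ∧ IsConnected J ∧ J ≠ Set.univ

/-- A homeomorphism of the circle is *minimal* if every (two-sided) orbit is dense. -/
def IsMinimalCircleHomeo (α : Circle ≃ₜ Circle) : Prop :=
  ∀ x : Circle, Dense (Set.range fun n : ℤ => (α.toEquiv ^ n) x)

open Set Function Filter Topology Real

section ReturnTime

variable {X : Type*} {f g : X → X} {U : Set X} {y z : X} {m n N : ℕ}

/-- This is `0` (the value of `sInf ∅`) when the orbit of `y` never comes back to `U`. -/
noncomputable def returnTime (f : X → X) (U : Set X) (y : X) : ℕ :=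
  sInf {m | 0 < m ∧ f^[m] y ∈ U}

lemma returnTime_spec (h : ∃ m, 0 < m ∧ f^[m] y ∈ U) :
    0 < returnTime f U y ∧ f^[returnTime f U y] y ∈ U :=
  Nat.sInf_mem h

lemma returnTime_le (hm : 0 < m) (h : f^[m] y ∈ U) : returnTime f U y ≤ m :=
  Nat.sInf_le ⟨hm, h⟩

lemma iterate_notMem_of_lt_returnTime (hm : 0 < m) (h : m < returnTime f U y) :
    f^[m] y ∉ U :=
  fun hU => Nat.notMem_of_lt_sInf h ⟨hm, hU⟩

lemma le_returnTime (h : ∃ m, 0 < m ∧ f^[m] y ∈ U)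
    (hn : ∀ j, 0 < j → j < n → f^[j] y ∉ U) : n ≤ returnTime f U y := by
  obtain ⟨hpos, hmem⟩ := returnTime_spec h
  by_contra! hlt
  exact hn _ hpos hlt hmem

lemma eq_of_iterate_eq_of_lt_returnTime (hf : Injective f) (hy : y ∈ U) (hz : z ∈ U)
    {i j : ℕ} (hi : i < returnTime f U y) (hj : j < returnTime f U z)
    (h : f^[i] y = f^[j] z) : i = j ∧ y = z := by
  wlog hij : i ≤ j generalizing i j y z
  · obtain ⟨hji, hzy⟩ := this hz hy hj hi h.symm (le_of_not_ge hij)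
    exact ⟨hji.symm, hzy.symm⟩
  have hyz : y = f^[j - i] z :=
    hf.iterate i (by rw [← iterate_add_apply, Nat.add_sub_cancel' hij, h])
  rcases Nat.eq_zero_or_pos (j - i) with h0 | h0
  · exact ⟨by omega, by rwa [h0, iterate_zero_apply] at hyz⟩
  · exact absurd (hyz ▸ hy) (iterate_notMem_of_lt_returnTime h0 (by omega))

lemma Function.LeftInverse.iterate_apply_iterate_of_le (hfg : LeftInverse f g) (h : m ≤ n)
    (x : X) : f^[m] (g^[n] x) = g^[n - m] x := by
  rw [← Nat.add_sub_cancel' h, iterate_add_apply, hfg.iterate m, Nat.add_sub_cancel_left]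

lemma exists_iterate_eq_of_lt_returnTime (hfg : LeftInverse f g)
    (hN : ∀ y, ∃ m, 0 < m ∧ m ≤ N ∧ f^[m] y ∈ U) (x : X) :
    ∃ y ∈ U, ∃ m < returnTime f U y, f^[m] y = x := by
  classical
  have hback : ∃ m, g^[m] x ∈ U := by
    obtain ⟨m, -, hmN, hm⟩ := hN (g^[N] x)
    exact ⟨N - m, hfg.iterate_apply_iterate_of_le hmN x ▸ hm⟩
  set e := Nat.find hback
  obtain ⟨m, hm, -, hmU⟩ := hN (g^[e] x)
  obtain ⟨hpos, hmem⟩ := returnTime_spec ⟨m, hm, hmU⟩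
  refine ⟨g^[e] x, Nat.find_spec hback, e, not_le.1 fun hle => ?_, hfg.iterate e x⟩
  rw [hfg.iterate_apply_iterate_of_le hle] at hmem
  exact Nat.find_min hback (by omega) hmem

/-- The first return lands in the open set `U`, and when no earlier iterate lies on
`frontier U` the earlier iterates lie in the open set `(closure U)ᶜ`; both persist nearby. -/
lemma returnTime_eventuallyEq [TopologicalSpace X] (hf : Continuous f) (hU : IsOpen U)
    (hy : ∃ m, 0 < m ∧ f^[m] y ∈ U)
    (hfr : ∀ j, 0 < j → j < returnTime f U y → f^[j] y ∉ frontier U) :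
    returnTime f U =ᶠ[𝓝 y] fun _ => returnTime f U y := by
  obtain ⟨hpos, hmem⟩ := returnTime_spec hy
  have hret : ∀ᶠ z in 𝓝 y, f^[returnTime f U y] z ∈ U :=
    (hf.iterate _).continuousAt.preimage_mem_nhds (hU.mem_nhds hmem)
  have hbefore : ∀ᶠ z in 𝓝 y, ∀ j ∈ Finset.Ioo 0 (returnTime f U y), f^[j] z ∉ closure U := by
    refine (eventually_all_finset _).2 fun j hj => ?_
    rw [Finset.mem_Ioo] at hj
    refine (isClosed_closure.isOpen_compl.preimage (hf.iterate j)).mem_nhds ?_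
    rw [mem_preimage, mem_compl_iff, closure_eq_self_union_frontier, mem_union, not_or]
    exact ⟨iterate_notMem_of_lt_returnTime hj.1 hj.2, hfr j hj.1 hj.2⟩
  filter_upwards [hret, hbefore] with z hz hzb
  refine (returnTime_le hpos hz).antisymm (not_lt.1 fun hlt => ?_)
  obtain ⟨hzpos, hzmem⟩ := returnTime_spec ⟨_, hpos, hz⟩
  exact hzb _ (Finset.mem_Ioo.2 ⟨hzpos, hlt⟩) (subset_closure hzmem)

lemma returnTime_eq_of_isPreconnected [TopologicalSpace X] (hf : Continuous f) (hU : IsOpen U)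
    (hN : ∀ y, ∃ m, 0 < m ∧ m ≤ N ∧ f^[m] y ∈ U) {S : Set X} (hS : IsPreconnected S)
    (hSF : Disjoint S (⋃ j ∈ Icc 1 N, f^[j] ⁻¹' frontier U)) (hy : y ∈ S) (hz : z ∈ S) :
    returnTime f U y = returnTime f U z := by
  refine hS.constant (Y := ℕ) (fun w hw => ?_) hy hz
  obtain ⟨m, hm, hmN, hmU⟩ := hN w
  have hfr : ∀ j, 0 < j → j < returnTime f U w → f^[j] w ∉ frontier U := fun j hj hjw hjU =>
    hSF.notMem_of_mem_left hw <| mem_biUnion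
      ⟨hj, hjw.le.trans ((returnTime_le hm hmU).trans hmN)⟩ hjU
  exact (continuousAt_const.congr
    (returnTime_eventuallyEq hf hU ⟨m, hm, hmU⟩ hfr).symm).continuousWithinAt

section Towers

variable {ι : Type*} {J : ι → Set X} {h : ι → ℕ}

lemma disjoint_image_iterate_of_lt_returnTime (hf : Injective f) (hJ : Pairwise (Disjoint on J))
    (hJU : ∀ i, J i ⊆ U) (hh : ∀ i, ∀ y ∈ J i, returnTime f U y = h i) {i i' : ι} {j j' : ℕ}
    (hj : j < h i) (hj' : j' < h i') (hne : (i, j) ≠ (i', j')) :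
    Disjoint (f^[j] '' J i) (f^[j'] '' J i') := by
  refine disjoint_left.2 ?_
  rintro _ ⟨y, hy, rfl⟩ ⟨z, hz, hzy⟩
  obtain ⟨rfl, rfl⟩ := eq_of_iterate_eq_of_lt_returnTime hf (hJU i' hz) (hJU i hy)
    ((hh i' z hz).symm ▸ hj') ((hh i y hy).symm ▸ hj) hzy
  obtain rfl : i' = i := hJ.eq (not_disjoint_iff.2 ⟨z, hz, hy⟩)
  exact hne rfl

lemma finite_compl_iUnion_image_iterate (hfg : LeftInverse f g)
    (hN : ∀ y, ∃ m, 0 < m ∧ m ≤ N ∧ f^[m] y ∈ U) (hh : ∀ i, ∀ y ∈ J i, returnTime f U y = h i)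
    (hfin : (U \ ⋃ i, J i).Finite) : (⋃ i, ⋃ j ∈ Iio (h i), f^[j] '' J i)ᶜ.Finite := by
  refine ((finite_Iio N).biUnion fun j _ => hfin.image f^[j]).subset fun x hx => ?_
  obtain ⟨y, hyU, m, hm, rfl⟩ := exists_iterate_eq_of_lt_returnTime hfg hN x
  obtain ⟨m', hm', hm'N, hm'U⟩ := hN y
  refine mem_biUnion (lt_of_lt_of_le hm ((returnTime_le hm' hm'U).trans hm'N))
    (mem_image_of_mem _ ⟨hyU, fun hyJ => hx ?_⟩)
  obtain ⟨i, hi⟩ := mem_iUnion.1 hyJ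
  exact mem_iUnion.2 ⟨i, mem_biUnion ((hh i y hi) ▸ hm) (mem_image_of_mem _ hi)⟩

theorem exists_towers_of_iUnion_eq_sdiff [TopologicalSpace X] {α : X ≃ₜ X} (hU : IsOpen U)
    (hN : ∀ y, ∃ m, 0 < m ∧ m ≤ N ∧ (⇑α)^[m] y ∈ U) {F : Set X} (hF : F.Finite)
    (hFU : ⋃ j ∈ Icc 1 N, (⇑α)^[j] ⁻¹' frontier U ⊆ F) (hJ : Pairwise (Disjoint on J))
    (hJc : ∀ i, IsConnected (J i)) (hJU : ⋃ i, J i = U \ F) :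
    ∃ h : ι → ℕ, (∀ i, ∀ y ∈ J i, returnTime α U y = h i) ∧
      (∀ i i' j j', j < h i → j' < h i' → (i, j) ≠ (i', j') →
        Disjoint ((⇑α)^[j] '' J i) ((⇑α)^[j'] '' J i')) ∧
      (⋃ i, ⋃ j ∈ Iio (h i), (⇑α)^[j] '' J i)ᶜ.Finite := by
  have hJUF : ∀ i, J i ⊆ U \ F := fun i => hJU ▸ subset_iUnion J i
  choose y hy using fun i => (hJc i).nonempty
  have hh : ∀ i, ∀ z ∈ J i, returnTime α U z = returnTime α U (y i) := fun i z hz =>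
    returnTime_eq_of_isPreconnected α.continuous hU hN (hJc i).isPreconnected
      ((disjoint_sdiff_left.mono_right hFU).mono_left (hJUF i)) hz (hy i)
  refine ⟨fun i => returnTime α U (y i), hh, fun i i' j j' hj hj' hne =>
    disjoint_image_iterate_of_lt_returnTime α.injective hJ (fun i => (hJUF i).trans sdiff_subset)
      hh hj hj' hne, finite_compl_iUnion_image_iterate α.apply_symm_apply hN hh ?_⟩
  rw [hJU, Set.sdiff_sdiff_right_self]
  exact hF.inter_of_right U

end Towers

end ReturnTime

lemma exists_mem_nhds_iterate_notMem {X : Type*} [TopologicalSpace X] [T2Space X] {f : X → X}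
    (hf : Continuous f) {n : ℕ} {x : X} (hx : ∀ j, 0 < j → j < n → f^[j] x ≠ x) :
    ∃ V ∈ 𝓝 x, ∀ y ∈ V, ∀ j, 0 < j → j < n → f^[j] y ∉ V := by
  have : ∀ᶠ p in 𝓝 x ×ˢ 𝓝 x, ∀ j ∈ Finset.Ioo 0 n, f^[j] p.1 ≠ p.2 := by
    rw [← nhds_prod_eq]
    refine (eventually_all_finset _).2 fun j hj => ?_
    rw [Finset.mem_Ioo] at hj
    exact (isOpen_ne_fun ((hf.iterate j).comp continuous_fst) continuous_snd).mem_nhds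
      (hx j hj.1 hj.2)
  obtain ⟨V, hV, hVV⟩ := mem_prod_self_iff.1 this
  exact ⟨V, hV, fun y hy j hj hjn hjV =>
    hVV (mk_mem_prod hy hjV) j (Finset.mem_Ioo.2 ⟨hj, hjn⟩) rfl⟩

section DenseOrbits

variable {X : Type*} [TopologicalSpace X] {α : X ≃ₜ X}

def Homeomorph.toPermHom : (X ≃ₜ X) →* Equiv.Perm X where
  toFun := Homeomorph.toEquiv
  map_one' := rfl
  map_mul' _ _ := rfl

lemma Homeomorph.continuous_toEquiv_zpow (α : X ≃ₜ X) (m : ℤ) :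
    Continuous ⇑(α.toEquiv ^ m) :=
  map_zpow Homeomorph.toPermHom α m ▸ (α ^ m).continuous

/-- By compactness finitely many `α^{-m} U` with `|m| ≤ K` cover `X`; applying this to
`α^{K+1} y` gives a visit of `y` to `U` at a time in `[1, 2K + 1]`. -/
lemma exists_bound_iterate_mem [CompactSpace X]
    (hα : ∀ x, Dense (range fun n : ℤ => (α.toEquiv ^ n) x)) {U : Set X} (hU : IsOpen U)
    (hne : U.Nonempty) : ∃ N, ∀ y, ∃ m, 0 < m ∧ m ≤ N ∧ (⇑α)^[m] y ∈ U := by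
  obtain ⟨s, hs⟩ := isCompact_univ.elim_finite_subcover (fun m : ℤ => ⇑(α.toEquiv ^ m) ⁻¹' U)
    (fun m => hU.preimage (α.continuous_toEquiv_zpow m)) fun y _ => by
      obtain ⟨_, ⟨m, rfl⟩, hm⟩ := (hα y).exists_mem_open hU hne
      exact mem_iUnion.2 ⟨m, hm⟩
  set K := s.sup Int.natAbs
  refine ⟨2 * K + 1, fun y => ?_⟩
  obtain ⟨m, hms, hm⟩ := mem_iUnion₂.1 (hs (mem_univ ((⇑α)^[K + 1] y)))
  have hmK : m.natAbs ≤ K := Finset.le_sup hms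
  refine ⟨(m + (K + 1 : ℕ)).toNat, by omega, by omega, ?_⟩
  rw [mem_preimage] at hm
  convert hm using 1
  rw [show (⇑α)^[K + 1] y = (α.toEquiv ^ ((K + 1 : ℕ) : ℤ)) y by rw [zpow_natCast]; rfl,
    ← Equiv.Perm.mul_apply, ← zpow_add, ← Int.toNat_of_nonneg (by omega : 0 ≤ m + (K + 1 : ℕ)),
    zpow_natCast]
  rfl

lemma iterate_ne_self_of_dense_zpow_orbit [T1Space X] [Infinite X]
    (hα : ∀ x, Dense (range fun n : ℤ => (α.toEquiv ^ n) x)) (x : X) {p : ℕ} (hp : 0 < p) :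
    (⇑α)^[p] x ≠ x := by
  intro hper
  have hfix : (α.toEquiv ^ (p : ℤ)) x = x := by rw [zpow_natCast]; exact hper
  have hsub : range (fun n : ℤ => (α.toEquiv ^ n) x) ⊆ (fun k => (⇑α)^[k] x) '' Iio p := by
    rintro _ ⟨m, rfl⟩
    have hm0 := Int.emod_nonneg m (by omega : (p : ℤ) ≠ 0)
    have hmp := Int.emod_lt_of_pos m (by omega : (0 : ℤ) < p)
    refine ⟨(m % p).toNat, by simp only [mem_Iio]; omega, ?_⟩
    dsimp only
    conv_rhs => rw [← Int.emod_add_mul_ediv m p, zpow_add, Equiv.Perm.mul_apply, zpow_mul,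
      Equiv.Perm.zpow_apply_eq_self_of_apply_eq_self hfix, ← Int.toNat_of_nonneg hm0, zpow_natCast]
    rfl
  have hfin := ((finite_Iio p).image _).subset hsub
  refine infinite_univ (α := X) ?_
  rwa [← (hα x).closure_eq, hfin.isClosed.closure_eq]

end DenseOrbits

lemma Finset.exists_monotone_enum {α : Type*} [LinearOrder α] (Q : Finset α) (hQ : Q.Nonempty) :
    ∃ g : ℕ → α, Monotone g ∧ StrictMonoOn g (Set.Iio Q.card) ∧ Set.range g = ↑Q ∧
      g 0 = Q.min' hQ ∧ g (Q.card - 1) = Q.max' hQ := by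
  have hs : 0 < Q.card := Finset.card_pos.2 hQ
  set e := Q.orderEmbOfFin rfl
  refine ⟨fun i => e ⟨min i (Q.card - 1), by omega⟩,
    fun i j hij => e.monotone (Fin.mk_le_mk.2 (min_le_min_right _ hij)),
    fun i hi j hj hij =>
      e.strictMono (Fin.mk_lt_mk.2 (by simp only [Set.mem_Iio] at hi hj; omega)),
    ?_, by simp only [Nat.zero_min, e, Finset.orderEmbOfFin_zero rfl hs], ?_⟩
  · refine (range_subset_iff.2 fun i => Finset.orderEmbOfFin_mem _ _ _).antisymm fun q hq => ?_
    obtain ⟨⟨i, hi⟩, rfl⟩ : q ∈ Set.range e := by rwa [Finset.range_orderEmbOfFin]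
    exact ⟨i, congrArg e (Fin.ext (min_eq_left (by omega)))⟩
  · simp only [min_self, e]
    rw [Finset.orderEmbOfFin_last rfl hs]

lemma exists_iUnion_Ioo_eq_Ioo_sdiff {α : Type*} [LinearOrder α] {a b : α} (hab : a < b)
    {P : Set α} (hP : P.Finite) :
    ∃ (k : ℕ) (c d : Fin k → α), 0 < k ∧ (∀ i, c i < d i) ∧
      Pairwise (Disjoint on fun i => Ioo (c i) (d i)) ∧ ⋃ i, Ioo (c i) (d i) = Ioo a b \ P := by
  classical
  set Q := insert a (insert b (hP.toFinset.filter (· ∈ Ioo a b)))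
  have haQ : a ∈ Q := by simp [Q]
  have hbQ : b ∈ Q := by simp [Q]
  have hQ : ∀ q ∈ Q, a ≤ q ∧ q ≤ b := by
    intro q hq
    simp only [Q, Finset.mem_insert, Finset.mem_filter, mem_Ioo] at hq
    rcases hq with rfl | rfl | ⟨-, h1, h2⟩
    exacts [⟨le_rfl, hab.le⟩, ⟨hab.le, le_rfl⟩, ⟨h1.le, h2.le⟩]
  have hQP : ∀ t ∈ Ioo a b, t ∈ Q ↔ t ∈ P := fun t ht => by
    simp [Q, ht.1.ne', ht.2.ne, ht.1, ht.2]
  have hcard : 2 ≤ Q.card := by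
    rw [← Finset.card_pair hab.ne]
    exact Finset.card_le_card (by simp [Q, Finset.insert_subset_iff])
  obtain ⟨g, hg_mono, hg_lt, hg_range, hg0, hglast⟩ := Q.exists_monotone_enum ⟨a, haQ⟩
  rw [le_antisymm (Finset.min'_le _ _ haQ) (hQ _ (Finset.min'_mem _ _)).1] at hg0
  rw [le_antisymm (hQ _ (Finset.max'_mem _ _)).2 (Finset.le_max' _ _ hbQ)] at hglast
  refine ⟨Q.card - 1, fun i => g i, fun i => g (i + 1), by omega, fun i =>
    hg_lt (by simp only [mem_Iio]; omega) (by simp only [mem_Iio]; omega) (lt_add_one _), ?_, ?_⟩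
  · have := hg_mono.pairwise_disjoint_on_Ioo_succ
    simp only [Order.succ_eq_add_one] at this
    exact this.comp_of_injective Fin.val_injective
  ext t
  simp only [mem_iUnion, Set.mem_sdiff, mem_Ioo]
  constructor
  · rintro ⟨i, hit, hti⟩
    have hat := hg0 ▸ hg_mono (Nat.zero_le i)
    have htb := hglast ▸ hg_mono (show i + 1 ≤ Q.card - 1 by omega)
    refine ⟨⟨hat.trans_lt hit, hti.trans_le htb⟩, fun htP => ?_⟩
    obtain ⟨m, rfl⟩ : t ∈ range g :=
      hg_range ▸ (hQP _ ⟨hat.trans_lt hit, hti.trans_le htb⟩).2 htP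
    rcases le_or_gt m i with h | h
    · exact (hg_mono h).not_gt hit
    · exact (hg_mono (show i + 1 ≤ m by omega)).not_gt hti
  · rintro ⟨⟨hat, htb⟩, htP⟩
    have htQ : t ∉ range g := hg_range ▸ fun h => htP ((hQP t ⟨hat, htb⟩).1 h)
    obtain ⟨i, hi, hti⟩ := mem_iUnion₂.1
      (Ico_subset_biUnion_Ico (Q.card - 1) g ⟨hg0.symm ▸ hat.le, hglast.symm ▸ htb⟩)
    exact ⟨⟨i, Finset.mem_range.1 hi⟩, lt_of_le_of_ne hti.1 (fun h => htQ ⟨i, h⟩), hti.2⟩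

namespace Circle

instance : Infinite Circle :=
  infinite_univ_iff.1 <| ((Ioo_infinite (neg_lt_self pi_pos)).image
    ((exp_injOn_Ioc (by linarith)).mono Ioo_subset_Ioc_self)).mono (subset_univ _)

lemma exists_exp_image_Ioo_subset {V : Set Circle} (hV : V ∈ 𝓝 1) :
    ∃ r, 0 < r ∧ r ≤ π ∧ exp '' Ioo (-r) r ⊆ V := by
  obtain ⟨m, -, hmV⟩ := hasBasis_centeredArc_div_two_pow.mem_iff.1 hV
  have hrπ : π / 2 ^ (m + 1) ≤ π := div_le_self pi_nonneg (one_le_pow₀ one_le_two)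
  exact ⟨_, by positivity, hrπ, (bijOn_exp_Ioo_centeredArc hrπ).image_eq.trans_subset hmV⟩

lemma isOpenArc_exp_image_Ioo {a b : ℝ} (hab : a < b) (hba : b - a ≤ 2 * π) :
    IsOpenArc (exp '' Ioo a b) := by
  refine ⟨isLocalHomeomorph_circleExp.isOpenMap _ isOpen_Ioo,
    (isConnected_Ioo hab).image _ exp.continuous.continuousOn, fun h => ?_⟩
  obtain ⟨t, ht, hte⟩ : exp b ∈ exp '' Ioo a b := h ▸ mem_univ _
  exact (exp_injOn_Ioc hba (Ioo_subset_Ioc_self ht) (right_mem_Ioc.2 hab) hte ▸ ht).2.false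

lemma finite_frontier_exp_image_Ioo {a b : ℝ} (hab : a ≤ b) :
    (frontier (exp '' Ioo a b)).Finite := by
  refine ((toFinite {a, b}).image exp).subset ?_
  rw [(isLocalHomeomorph_circleExp.isOpenMap _ isOpen_Ioo).frontier_eq]
  rintro _ ⟨hy, hyU⟩
  obtain ⟨t, ht, rfl⟩ := closure_minimal (image_mono Ioo_subset_Icc_self)
    (isCompact_Icc.image exp.continuous).isClosed hy
  exact mem_image_of_mem _ (Icc_sdiff_Ioo_same hab ▸ ⟨ht, fun h => hyU (mem_image_of_mem _ h)⟩)

theorem exists_isOpenArc_iUnion_eq_exp_image_Ioo_sdiff {a b : ℝ} (hab : a < b)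
    (hba : b - a ≤ 2 * π) {F : Set Circle} (hF : F.Finite) :
    ∃ (k : ℕ) (J : Fin k → Set Circle), 0 < k ∧ (∀ i, IsOpenArc (J i)) ∧
      Pairwise (Disjoint on J) ∧ ⋃ i, J i = exp '' Ioo a b \ F := by
  have hinj : InjOn exp (Ioo a b) := (exp_injOn_Ioc hba).mono Ioo_subset_Ioc_self
  have hP : (Ioo a b ∩ exp ⁻¹' F).Finite :=
    Finite.of_finite_image (hF.subset ((image_mono inter_subset_right).trans
      (image_preimage_subset _ _))) (hinj.mono inter_subset_left)
  obtain ⟨k, c, d, hk, hcd, hdisj, hunion⟩ := exists_iUnion_Ioo_eq_Ioo_sdiff hab hP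
  have hsub : ∀ i, Ioo (c i) (d i) ⊆ Ioo a b := fun i =>
    (subset_iUnion (fun i => Ioo (c i) (d i)) i).trans (hunion ▸ sdiff_subset)
  refine ⟨k, fun i => exp '' Ioo (c i) (d i), hk, fun i => isOpenArc_exp_image_Ioo (hcd i) ?_,
    fun i j hij => (hdisj hij).image hinj (hsub i) (hsub j), ?_⟩
  · obtain ⟨h1, h2⟩ := (Ioo_subset_Ioo_iff (hcd i)).1 (hsub i)
    linarith
  · rw [← image_iUnion, hunion, sdiff_self_inter, image_sdiff_preimage]

end Circle

/-- Rokhlin-type partition of the circle for a minimal homeomorphism `α`: for any `n > 1`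
there are finitely many pairwise disjoint open arcs `J 1, …, J k` and heights
`h i ≥ n` such that the sets `α^j(J i)`, `0 ≤ j ≤ h i − 1`, are pairwise disjoint
and cover the circle up to a finite set. -/
theorem stmt8 (α : Circle ≃ₜ Circle) (hmin : IsMinimalCircleHomeo α)
    (n : ℕ) (hn : 1 < n) :
    ∃ (k : ℕ) (J : Fin k → Set Circle) (h : Fin k → ℕ),
      0 < k ∧
      (∀ i, IsOpenArc (J i)) ∧
      (∀ i, n ≤ h i) ∧
      (∀ i i' : Fin k, ∀ j j' : ℕ, j ≤ h i - 1 → j' ≤ h i' - 1 →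
        (i, j) ≠ (i', j') →
          Disjoint ((⇑α)^[j] '' J i) ((⇑α)^[j'] '' J i')) ∧
      (Set.univ \ ⋃ i, ⋃ j ∈ Set.Iic (h i - 1), (⇑α)^[j] '' J i).Finite := by
  obtain ⟨V, hV, hVsep⟩ := exists_mem_nhds_iterate_notMem α.continuous
    (n := n) fun j hj _ => iterate_ne_self_of_dense_zpow_orbit hmin 1 hj
  obtain ⟨r, hr, hrπ, hUV⟩ := Circle.exists_exp_image_Ioo_subset hV
  set U := Circle.exp '' Ioo (-r) r
  have hUopen : IsOpen U := isLocalHomeomorph_circleExp.isOpenMap _ isOpen_Ioo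
  obtain ⟨N, hN⟩ := exists_bound_iterate_mem hmin hUopen
    ⟨_, mem_image_of_mem _ ⟨neg_lt_zero.2 hr, hr⟩⟩
  set F := ⋃ j ∈ Icc 1 N, (⇑α)^[j] ⁻¹' frontier U
  have hF : F.Finite := (finite_Icc 1 N).biUnion fun j _ =>
    (Circle.finite_frontier_exp_image_Ioo (by linarith)).preimage (α.injective.iterate j).injOn
  obtain ⟨k, J, hk, harc, hdisj, hJ⟩ :=
    Circle.exists_isOpenArc_iUnion_eq_exp_image_Ioo_sdiff (by linarith : -r < r) (by linarith) hF
  obtain ⟨h, hh, htowers, hfin⟩ := exists_towers_of_iUnion_eq_sdiff hUopen hN hF subset_rfl hdisj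
    (fun i => (harc i).2.1) hJ
  have hhn : ∀ i, n ≤ h i := fun i => by
    obtain ⟨y, hy⟩ := (harc i).2.1.nonempty
    have hyU : y ∈ U := (hJ ▸ subset_iUnion J i hy).1
    exact hh i y hy ▸ le_returnTime ((hN y).imp fun _ hm => ⟨hm.1, hm.2.2⟩)
      fun j hj hjn hjU => hVsep y (hUV hyU) j hj hjn (hUV hjU)
  have hIic : ∀ i, Iic (h i - 1) = Iio (h i) := fun i => by
    ext j
    have := hhn i
    simp only [mem_Iic, mem_Iio]
    omega
  refine ⟨k, J, h, hk, harc, hhn, fun i i' j j' hj hj' => htowers i i' j j' ?_ ?_, ?_⟩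
  · rwa [← mem_Iic, hIic, mem_Iio] at hj
  · rwa [← mem_Iic, hIic, mem_Iio] at hj'
  · simpa only [hIic, ← compl_eq_univ_sdiff] using hfin
end

section
/- Let θ be an irrational number, let f : 𝕋 → ℝ be a continuous function, and let d be a nonzero integer. Then for every ε > 0 there exist an integer k ∈ ℤ and a continuous function g₀ : 𝕋 → ℝ such that the map g : 𝕋 → 𝕋 defined by g(ξ) = ξ^{kd} · e^{2πi g₀(ξ)} satisfies |e^{2πi f(ξ)} · g(ξ) · conj(g(ξ · e^{2πiθ})) − 1| < ε for all ξ ∈ 𝕋. -/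
open Complex

namespace Stmt12Aux

lemma coe_pow' (z : Circle) (k : ℕ) : ((z ^ k : Circle) : ℂ) = (z : ℂ) ^ k := by
  induction k with
  | zero => simp
  | succ k ih => rw [pow_succ, pow_succ, Circle.coe_mul, ih]

lemma coe_zpow' (z : Circle) (n : ℤ) : ((z ^ n : Circle) : ℂ) = (z : ℂ) ^ n := by
  cases n with
  | ofNat k => simpa using coe_pow' z k
  | negSucc k => rw [zpow_negSucc, zpow_negSucc, Circle.coe_inv, coe_pow']

/-- Trigonometric approximation on the circle. -/
lemma exists_trig (F : Circle → ℝ) (hF : Continuous F) {δ : ℝ} (hδ : 0 < δ) :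
    ∃ c : ℤ →₀ ℂ, ∀ ξ : Circle,
      ‖(F ξ : ℂ) - ∑ n ∈ c.support, c n * (ξ : ℂ) ^ n‖ < δ := by
  haveI : Fact ((0:ℝ) < 1) := ⟨one_pos⟩
  set e : AddCircle (1:ℝ) ≃ₜ Circle := AddCircle.homeomorphCircle one_ne_zero with he
  set G : C(AddCircle (1:ℝ), ℂ) :=
    ⟨fun y => (F (e y) : ℂ), by
      exact Complex.continuous_ofReal.comp (hF.comp e.continuous)⟩ with hG
  have hmem : G ∈ closure ((Submodule.span ℂ (Set.range (@fourier 1)) : Submodule ℂ _) :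
      Set C(AddCircle (1:ℝ), ℂ)) := by
    rw [← Submodule.topologicalClosure_coe, span_fourier_closure_eq_top]
    trivial
  obtain ⟨P, hP, hPd⟩ := Metric.mem_closure_iff.mp hmem δ hδ
  obtain ⟨c, rfl⟩ := Finsupp.mem_span_range_iff_exists_finsupp.mp hP
  refine ⟨c, fun ξ => ?_⟩
  have h1 : ∀ (n : ℤ) (y : AddCircle 1), fourier n y = ((AddCircle.toCircle y ^ n : Circle) : ℂ) := by
    intro n y
    rw [fourier_apply]
    congr 1
    exact AddChar.map_zsmul_eq_zpow AddCircle.toCircle_addChar n y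
  have h2 : AddCircle.toCircle (e.symm ξ) = ξ := by
    rw [← AddCircle.homeomorphCircle_apply one_ne_zero]
    exact e.apply_symm_apply ξ
  have hd := ContinuousMap.dist_apply_le_dist (f := G)
    (g := Finsupp.sum c fun n a => a • fourier n) (e.symm ξ)
  have hGx : G (e.symm ξ) = (F ξ : ℂ) := by
    simp only [hG, ContinuousMap.coe_mk, e.apply_symm_apply]
  have hPx : (Finsupp.sum c fun n a => a • fourier n) (e.symm ξ)
      = ∑ n ∈ c.support, c n * (ξ : ℂ) ^ n := by
    rw [Finsupp.sum]
    rw [ContinuousMap.coe_sum, Finset.sum_apply]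
    refine Finset.sum_congr rfl fun n _ => ?_
    simp only [ContinuousMap.smul_apply, smul_eq_mul]
    rw [h1 n, h2, coe_zpow']
  rw [← hGx, ← hPx, ← Complex.dist_eq]
  exact lt_of_le_of_lt hd hPd

/-- Density of `ℤα + ℤ` for irrational `α`. -/
lemma exists_int_approx {α : ℝ} (hα : Irrational α) (a : ℝ) {δ : ℝ} (hδ : 0 < δ) :
    ∃ k m : ℤ, |a - (k * α + m)| < δ := by
  set S : AddSubgroup ℝ := AddSubgroup.closure {α, 1} with hS
  have hdense : Dense (S : Set ℝ) := by
    rcases S.dense_or_cyclic with h | ⟨b, hb⟩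
    · exact h
    · exfalso
      have h1 : (1:ℝ) ∈ S := AddSubgroup.subset_closure (by simp)
      have hαS : α ∈ S := AddSubgroup.subset_closure (by simp)
      rw [hb] at h1 hαS
      rw [AddSubgroup.mem_closure_singleton] at h1 hαS
      obtain ⟨n, hn⟩ := h1
      obtain ⟨p, hp⟩ := hαS
      have hn0 : (n:ℝ) ≠ 0 := by
        intro h
        rw [zsmul_eq_mul, h, zero_mul] at hn
        exact one_ne_zero hn.symm
      refine hα ⟨(p : ℚ) / (n : ℚ), ?_⟩
      rw [zsmul_eq_mul] at hn hp
      have hb' : b = 1 / n := by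
        rw [eq_div_iff hn0]
        linarith [hn]
      push_cast
      rw [← hp, hb']
      field_simp
  obtain ⟨y, hy, hyd⟩ := hdense.exists_dist_lt a hδ
  have hy' : y ∈ AddSubgroup.closure ({α, 1} : Set ℝ) := hy
  rw [AddSubgroup.mem_closure_pair] at hy'
  obtain ⟨k, m, hkm⟩ := hy'
  refine ⟨k, m, ?_⟩
  rw [Real.dist_eq] at hyd
  rw [zsmul_eq_mul, zsmul_eq_mul, mul_one] at hkm
  rwa [hkm]

end Stmt12Aux

open Stmt12Aux in
/-- Refinement of the approximate-coboundary lemma: the continuous map `g` may be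
chosen of the form `g(ξ) = ξ^{kd}·e^{2πi g₀(ξ)}` with `k ∈ ℤ` and `g₀ : 𝕋 → ℝ`
continuous. -/
theorem stmt12 (θ : ℝ) (hθ : Irrational θ) (f : Circle → ℝ) (hf : Continuous f)
    (d : ℤ) (hd : d ≠ 0) (ε : ℝ) (hε : 0 < ε) :
    ∃ (k : ℤ) (g₀ : Circle → ℝ), Continuous g₀ ∧
      ∀ ξ : Circle,
        ‖(Circle.exp (2 * Real.pi * f ξ) : ℂ) *
          ((ξ ^ (k * d) * Circle.exp (2 * Real.pi * g₀ ξ) : Circle) : ℂ) *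
          (starRingEnd ℂ)
            (((ξ * Circle.exp (2 * Real.pi * θ)) ^ (k * d) *
              Circle.exp (2 * Real.pi * g₀ (ξ * Circle.exp (2 * Real.pi * θ))) : Circle) : ℂ)
          - 1‖ < ε := by
  set π := Real.pi
  have hπ : 0 < π := Real.pi_pos
  set lam : Circle := Circle.exp (2 * π * θ) with hlamdef
  -- powers of lam
  have hlampow : ∀ n : ℤ, ((lam : ℂ)) ^ n = Complex.exp ((n : ℂ) * ((2 * π * θ : ℝ) * I)) := by
    intro n
    rw [hlamdef, Circle.coe_exp, ← Complex.exp_int_mul]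
  have hlamne : ∀ n : ℤ, n ≠ 0 → ((lam : ℂ)) ^ n ≠ 1 := by
    intro n hn h
    rw [hlampow n, Complex.exp_eq_one_iff] at h
    obtain ⟨m, hm⟩ := h
    have h2 : ((n * (2 * π * θ) : ℝ) : ℂ) = ((m * (2 * π) : ℝ) : ℂ) := by
      have : ((n * (2 * π * θ) : ℝ) : ℂ) * I = ((m * (2 * π) : ℝ) : ℂ) * I := by
        push_cast
        push_cast at hm
        linear_combination hm
      exact mul_right_cancel₀ I_ne_zero this
    have h3 : (n : ℝ) * (2 * π * θ) = m * (2 * π) := by exact_mod_cast h2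
    have hn' : (n : ℝ) ≠ 0 := Int.cast_ne_zero.mpr hn
    refine hθ ⟨(m : ℚ) / (n : ℚ), ?_⟩
    have : (n : ℝ) * θ = m := by
      have h2π : (2 * π) ≠ 0 := by positivity
      field_simp at h3
      nlinarith [h3]
    push_cast
    rw [div_eq_iff hn', mul_comm, this]
  -- choose δ
  set δ : ℝ := min (ε / (8 * π + 1)) (1 / (8 * π)) with hδdef
  have hδ : 0 < δ := by
    apply lt_min
    · positivity
    · positivity
  -- trig approximation
  obtain ⟨c, hc⟩ := exists_trig f hf hδ
  set P : Circle → ℂ := fun ξ => ∑ n ∈ c.support, c n * (ξ : ℂ) ^ n with hPdef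
  -- g₀
  set g₀ : Circle → ℝ :=
    fun ξ => (∑ n ∈ c.support.erase 0, c n / ((lam : ℂ) ^ n - 1) * (ξ : ℂ) ^ n).re with hg₀def
  have hg₀cont : Continuous g₀ := by
    apply Complex.continuous_re.comp
    apply continuous_finset_sum
    intro n _
    exact continuous_const.mul
      (continuous_subtype_val.zpow₀ n fun ξ => Or.inl (Circle.coe_ne_zero ξ))
  -- the coboundary identity
  have hcob : ∀ ξ : Circle, g₀ ξ - g₀ (ξ * lam) = (c 0).re - (P ξ).re := by
    intro ξ
    have key : (∑ n ∈ c.support.erase 0, c n / ((lam : ℂ) ^ n - 1) * (ξ : ℂ) ^ n)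
        - (∑ n ∈ c.support.erase 0, c n / ((lam : ℂ) ^ n - 1) * ((ξ * lam : Circle) : ℂ) ^ n)
        = c 0 - P ξ := by
      rw [← Finset.sum_sub_distrib]
      have step : ∀ n ∈ c.support.erase 0,
          c n / ((lam : ℂ) ^ n - 1) * (ξ : ℂ) ^ n
            - c n / ((lam : ℂ) ^ n - 1) * ((ξ * lam : Circle) : ℂ) ^ n
          = -(c n * (ξ : ℂ) ^ n) := by
        intro n hn
        have hn0 : n ≠ 0 := Finset.ne_of_mem_erase hn
        have hden : (lam : ℂ) ^ n - 1 ≠ 0 := sub_ne_zero.2 (hlamne n hn0)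
        rw [Circle.coe_mul, mul_zpow]
        field_simp
        ring
      rw [Finset.sum_congr rfl step, Finset.sum_neg_distrib]
      have hsplit : P ξ = c 0 + ∑ n ∈ c.support.erase 0, c n * (ξ : ℂ) ^ n := by
        have hPx : P ξ = ∑ n ∈ c.support, c n * (ξ : ℂ) ^ n := rfl
        by_cases h0 : (0:ℤ) ∈ c.support
        · rw [hPx, ← Finset.add_sum_erase _ (fun n => c n * (ξ : ℂ) ^ n) h0]
          simp
        · rw [hPx, Finset.erase_eq_of_notMem h0, Finsupp.notMem_support_iff.mp h0]
          simp
      rw [hsplit]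
      ring
    have := congrArg Complex.re key
    rw [Complex.sub_re, Complex.sub_re] at this
    simpa [hg₀def] using this
  -- choose k, m
  have hdθ : Irrational ((d : ℝ) * θ) := hθ.intCast_mul hd
  obtain ⟨k, m, hkm⟩ := exists_int_approx hdθ ((c 0).re) hδ
  refine ⟨k, g₀, hg₀cont, fun ξ => ?_⟩
  -- the remainder
  set r : ℝ := f ξ + (g₀ ξ - g₀ (ξ * lam)) - (k * ((d : ℝ) * θ) + m) with hrdef
  have hr : |r| < 2 * δ := by
    have h1 : |f ξ - (P ξ).re| < δ := by
      have := hc ξ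
      calc |f ξ - (P ξ).re| = |((f ξ : ℂ) - P ξ).re| := by
            rw [Complex.sub_re, Complex.ofReal_re]
        _ ≤ ‖(f ξ : ℂ) - P ξ‖ := Complex.abs_re_le_norm _
        _ < δ := this
    have h2 := hkm
    rw [hrdef, hcob ξ]
    calc |f ξ + ((c 0).re - (P ξ).re) - ((k:ℝ) * ((d:ℝ) * θ) + m)|
        = |(f ξ - (P ξ).re) + ((c 0).re - ((k:ℝ) * ((d:ℝ) * θ) + m))| := by ring_nf
      _ ≤ |f ξ - (P ξ).re| + |(c 0).re - ((k:ℝ) * ((d:ℝ) * θ) + m)| := abs_add_le _ _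
      _ < δ + δ := add_lt_add h1 h2
      _ = 2 * δ := by ring
  -- identify the expression with exp(2π r I) (note exp(2π m I) = 1)
  have hexp : (Circle.exp (2 * π * f ξ) : ℂ) *
        ((ξ ^ (k * d) * Circle.exp (2 * π * g₀ ξ) : Circle) : ℂ) *
        (starRingEnd ℂ)
          (((ξ * lam) ^ (k * d) * Circle.exp (2 * π * g₀ (ξ * lam)) : Circle) : ℂ)
      = Complex.exp (((2 * π * r : ℝ) : ℂ) * I + ((m : ℂ) * (2 * π) * I)) := by
    have e1 : ((ξ ^ (k * d) * Circle.exp (2 * π * g₀ ξ) : Circle) : ℂ)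
        = (ξ : ℂ) ^ (k * d) * Complex.exp (((2 * π * g₀ ξ : ℝ) : ℂ) * I) := by
      rw [Circle.coe_mul, coe_zpow', Circle.coe_exp]
    have e2 : (starRingEnd ℂ)
          (((ξ * lam) ^ (k * d) * Circle.exp (2 * π * g₀ (ξ * lam)) : Circle) : ℂ)
        = ((((ξ * lam) ^ (k * d) * Circle.exp (2 * π * g₀ (ξ * lam)) : Circle))⁻¹ : ℂ) := by
      exact (Circle.coe_inv_eq_conj _).symm
    rw [e1, e2]
    rw [Circle.coe_mul, coe_zpow', Circle.coe_exp, Circle.coe_exp,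
      Circle.coe_mul, mul_zpow]
    have hξ : (ξ : ℂ) ^ (k * d) ≠ 0 := zpow_ne_zero _ (Circle.coe_ne_zero ξ)
    have hlamz : (lam : ℂ) ^ (k * d) ≠ 0 := zpow_ne_zero _ (Circle.coe_ne_zero lam)
    rw [hlampow (k * d)]
    rw [mul_inv, mul_inv, ← Complex.exp_neg, ← Complex.exp_neg]
    rw [show ∀ (a b c e x : ℂ), a * (x * b) * (x⁻¹ * c * e) = x * x⁻¹ * (a * b * c * e) from
      fun a b c e x => by ring]
    rw [mul_inv_cancel₀ hξ, one_mul, ← Complex.exp_add, ← Complex.exp_add, ← Complex.exp_add]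
    congr 1
    rw [hrdef]
    push_cast
    ring
  have hm1 : Complex.exp (((2 * π * r : ℝ) : ℂ) * I + ((m : ℂ) * (2 * π) * I))
      = Complex.exp (((2 * π * r : ℝ) : ℂ) * I) := by
    rw [Complex.exp_add,
      show ((m:ℂ) * (2 * (π:ℝ)) * I) = (m:ℂ) * (2 * (Real.pi:ℂ) * I) by push_cast; ring,
      Complex.exp_int_mul_two_pi_mul_I, mul_one]
  rw [hlamdef] at hexp
  rw [hexp, hm1]
  have habs : ‖((2 * π * r : ℝ) : ℂ) * I‖ = 2 * π * |r| := by
    rw [norm_mul, Complex.norm_I, mul_one, Complex.norm_real, Real.norm_eq_abs, abs_mul]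
    rw [abs_of_pos (by positivity : (0:ℝ) < 2 * π)]
  have hsmall : ‖((2 * π * r : ℝ) : ℂ) * I‖ ≤ 1 := by
    rw [habs]
    have h1 : |r| ≤ 2 * δ := le_of_lt hr
    have hδ2 : δ ≤ 1 / (8 * π) := min_le_right _ _
    have heq : 2 * π * (2 * (1 / (8 * π))) = 1 / 2 := by
      field_simp
      ring
    calc 2 * π * |r| ≤ 2 * π * (2 * (1 / (8 * π))) := by
          gcongr
          linarith
      _ = 1 / 2 := heq
      _ ≤ 1 := by norm_num
  calc ‖Complex.exp (((2 * π * r : ℝ) : ℂ) * I) - 1‖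
      ≤ 2 * ‖((2 * π * r : ℝ) : ℂ) * I‖ := Complex.norm_exp_sub_one_le hsmall
    _ = 4 * π * |r| := by rw [habs]; ring
    _ < 4 * π * (2 * δ) := by
        have h4 : (0:ℝ) < 4 * π := by positivity
        exact (mul_lt_mul_iff_right₀ h4).mpr (by linarith)
    _ ≤ 4 * π * (2 * (ε / (8 * π + 1))) := by
        have hδ1 : δ ≤ ε / (8 * π + 1) := min_le_left _ _
        gcongr
    _ = ε * (8 * π / (8 * π + 1)) := by ring
    _ < ε * 1 := by
        have h1 : (0:ℝ) < 8 * π + 1 := by positivity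
        exact mul_lt_mul_of_pos_left ((div_lt_one h1).mpr (by linarith)) hε
    _ = ε := mul_one ε
end
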